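/- arXiv:math/0507354 — 5 statements merged into one kernel-verified Lean document; each statement's English description precedes it below -/
import Mathlib

section
/- Let X be a Banach space with property (X). If F ∈ X** is Borel measurable as a scalar-valued function on X* equipped with the weak-* topology σ(X*, X), then F belongs to the canonical image of X in X**. -/
/-!
Suppose `F ∉ X` and take a wuC series `∑ xⱼ*` with weak-* sum `g` and `∑ F(xⱼ*) ≠ F(g)`.
For `ε : ℕ → Bool` let `φ ε` be the weak-* sum of the subseries `∑_{ε j} xⱼ*`. The map `φ` is
continuous from the Cantor space into `(X*, w*)`, so `k ε = F (φ ε) - ∑_{ε j} F(xⱼ*)` is Borel.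
It is additive on disjoint supports and vanishes on finite ones. A Borel function is continuous
on a comeagre set; approximating `α` by `α ⊓ ([0, n) ⊔ β)` gives `k α = k (α ⊓ β)` for generic
pairs `(α, β)`, and additivity then forces `k α = k αᶜ = 0` for such `α`, whence
`F g - ∑ F(xⱼ*) = k ⊤ = 0`.
-/

open NormedSpace

/-- A Banach space `X` has property (X): for every `F` in the bidual not in the
canonical image of `X` there is a weakly unconditionally Cauchy series `∑ xⱼ*` in the
dual with weak-* sum `g` such that `∑ F(xⱼ*) ≠ F(g)`. -/
def HasPropertyX (X : Type*) [NormedAddCommGroup X] [NormedSpace ℝ X] : Prop :=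
  ∀ F : StrongDual ℝ (StrongDual ℝ X), F ∉ Set.range (inclusionInDoubleDual ℝ X) →
    ∃ (x : ℕ → StrongDual ℝ X) (g : StrongDual ℝ X),
      (∀ G : StrongDual ℝ (StrongDual ℝ X), Summable fun j => |G (x j)|) ∧
      (∀ v : X, HasSum (fun j => (x j) v) (g v)) ∧
      (∑' j, F (x j)) ≠ F g

open Topology Filter Set

theorem Measurable.exists_mem_residual_continuousOn {γ : Type*} [TopologicalSpace γ]
    [MeasurableSpace γ] [BorelSpace γ] {f : γ → ℝ} (hf : Measurable f) :
    ∃ D ∈ residual γ, ContinuousOn f D := by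
  obtain ⟨b, hbc, -, hb⟩ := TopologicalSpace.exists_countable_basis ℝ
  have hopen : ∀ u ∈ b, ∃ V : Set γ, IsOpen V ∧ f ⁻¹' u =ᵇ V := fun u hu =>
    (hf (hb.isOpen hu).measurableSet).residualEq_isOpen
  choose! V hVopen hVeq using hopen
  -- Off a meagre set, every basic preimage `f ⁻¹' u` agrees with the open set `V u`.
  refine ⟨⋂ u ∈ b, {x | (x ∈ f ⁻¹' u) = (x ∈ V u)}, (countable_bInter_mem hbc).2 hVeq,
    fun x hx => ?_⟩
  simp only [mem_iInter₂, mem_ofPred_eq] at hx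
  rw [ContinuousWithinAt, hb.nhds_hasBasis.tendsto_right_iff]
  rintro u ⟨hub, hxu⟩
  have hxV : x ∈ V u := hx u hub ▸ hxu
  filter_upwards [mem_nhdsWithin_of_mem_nhds ((hVopen u hub).mem_nhds hxV),
    self_mem_nhdsWithin] with y hyV hyD
  simp only [mem_iInter₂, mem_ofPred_eq] at hyD
  exact (hyD u hub).symm ▸ hyV

theorem tendsto_residual_coordinatewise {ι A B C : Type*} [TopologicalSpace A]
    [TopologicalSpace B] [TopologicalSpace C] [DiscreteTopology A] [DiscreteTopology B]
    [DiscreteTopology C] (f : ι → A → B → C) (hf : ∀ j, Function.Surjective (f j).uncurry) :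
    Tendsto (fun p : (ι → A) × (ι → B) => fun j => f j (p.1 j) (p.2 j))
      (residual _) (residual _) := by
  let e : (ι → A) × (ι → B) ≃ₜ (ι → A × B) :=
    { toEquiv := (Equiv.arrowProdEquivProdArrow ι _ _).symm
      continuous_toFun := by fun_prop
      continuous_invFun := by fun_prop }
  have hopen : IsOpenMap (Pi.map fun j => (f j).uncurry) :=
    .piMap (fun _ _ _ => isOpen_discrete _) (.of_forall hf)
  have hcont : Continuous (Pi.map fun j => (f j).uncurry) :=
    .piMap fun _ => continuous_of_discreteTopology
  exact tendsto_residual_of_isOpenMap (hcont.comp e.continuous) (hopen.comp e.isOpenMap)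

def complHomeomorph (ι : Type*) : (ι → Bool) ≃ₜ (ι → Bool) :=
  Homeomorph.piCongrRight fun _ => Equiv.boolNot.toHomeomorphOfDiscrete

section CantorSpace

variable {k : (ℕ → Bool) → ℝ}

theorem eq_apply_inf_of_continuousWithinAt {D : Set (ℕ → Bool)} {α β : ℕ → Bool}
    (hadd : ∀ ε δ, Disjoint ε δ → k (ε ⊔ δ) = k ε + k δ)
    (hfin : ∀ δ : ℕ → Bool, {j | δ j}.Finite → k δ = 0)
    (hk : ContinuousWithinAt k D α) (hD : ∀ n, α ⊓ ((fun j => decide (j < n)) ⊔ β) ∈ D) :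
    k α = k (α ⊓ β) := by
  set γ : ℕ → ℕ → Bool := fun n => α ⊓ ((fun j => decide (j < n)) ⊔ β)
  -- `γ n` differs from `α ⊓ β` by the finite set `α ⊓ βᶜ ∩ [0, n)`, and `γ n → α`.
  have hconst : ∀ n, k (γ n) = k (α ⊓ β) := by
    intro n
    have hsplit : γ n = (α ⊓ β) ⊔ (α ⊓ βᶜ ⊓ fun j => decide (j < n)) := by
      ext j
      simp only [γ, Pi.inf_apply, Pi.sup_apply, Pi.compl_apply]
      cases α j <;> cases β j <;> simp
    have hdisj : Disjoint (α ⊓ β) (α ⊓ βᶜ ⊓ fun j => decide (j < n)) :=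
      (disjoint_compl_right.mono inf_le_right (inf_le_left.trans inf_le_right))
    have hfinite : {j | (α ⊓ βᶜ ⊓ fun j => decide (j < n)) j}.Finite :=
      (finite_Iio n).subset fun j hj => by simp_all
    rw [hsplit, hadd _ _ hdisj, hfin _ hfinite, add_zero]
  have hlim : Tendsto γ atTop (𝓝 α) := by
    refine tendsto_pi_nhds.2 fun j => tendsto_const_nhds.congr' ?_
    filter_upwards [eventually_gt_atTop j] with n hn
    simp [γ, hn]
  exact tendsto_nhds_unique (hk.tendsto.comp (tendsto_nhdsWithin_iff.2 ⟨hlim, .of_forall hD⟩))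
    (tendsto_const_nhds.congr fun n => (hconst n).symm)

theorem eventually_residual_apply_fst_eq_apply_inf (hk : Measurable k)
    (hadd : ∀ ε δ, Disjoint ε δ → k (ε ⊔ δ) = k ε + k δ)
    (hfin : ∀ δ : ℕ → Bool, {j | δ j}.Finite → k δ = 0) :
    ∀ᶠ p in residual ((ℕ → Bool) × (ℕ → Bool)), k p.1 = k (p.1 ⊓ p.2) := by
  obtain ⟨D, hD, hkD⟩ := hk.exists_mem_residual_continuousOn
  have hfst : ∀ᶠ p in residual ((ℕ → Bool) × (ℕ → Bool)), p.1 ∈ D :=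
    tendsto_residual_coordinatewise (fun _ a (_ : Bool) => a)
      (fun _ a => ⟨(a, a), rfl⟩) hD
  have hγ : ∀ᶠ p in residual ((ℕ → Bool) × (ℕ → Bool)),
      ∀ n, p.1 ⊓ ((fun j => decide (j < n)) ⊔ p.2) ∈ D :=
    eventually_countable_forall.2 fun n =>
      tendsto_residual_coordinatewise (fun j a b => a && (decide (j < n) || b))
        (fun _ c => ⟨(c, true), by simp⟩) hD
  filter_upwards [hfst, hγ] with p hp hpγ
  exact eq_apply_inf_of_continuousWithinAt hadd hfin (hkD _ hp) hpγ

theorem apply_top_eq_zero_of_measurable (hk : Measurable k)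
    (hadd : ∀ ε δ, Disjoint ε δ → k (ε ⊔ δ) = k ε + k δ)
    (hfin : ∀ δ : ℕ → Bool, {j | δ j}.Finite → k δ = 0) :
    k ⊤ = 0 := by
  have hgen := eventually_residual_apply_fst_eq_apply_inf hk hadd hfin
  have hpull : ∀ e : (ℕ → Bool) × (ℕ → Bool) ≃ₜ (ℕ → Bool) × (ℕ → Bool),
      ∀ᶠ p in residual _, k (e p).1 = k ((e p).1 ⊓ (e p).2) := fun e =>
    (tendsto_residual_of_isOpenMap e.continuous e.isOpenMap).eventually hgen
  let c := complHomeomorph ℕ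
  let r := Homeomorph.refl (ℕ → Bool)
  obtain ⟨⟨α, β⟩, h₁, h₂, h₃, h₄⟩ := (dense_of_mem_residual
    (hgen.and <| (hpull (r.prodCongr c)).and <| (hpull (c.prodCongr r)).and
      (hpull (c.prodCongr c)))).nonempty
  change k α = k (α ⊓ βᶜ) at h₂
  change k αᶜ = k (αᶜ ⊓ β) at h₃
  change k αᶜ = k (αᶜ ⊓ βᶜ) at h₄
  have hsplit : ∀ a b : ℕ → Bool, k a = k (a ⊓ b) + k (a ⊓ bᶜ) := fun a b => by
    rw [← hadd _ _ (disjoint_compl_right.mono inf_le_right inf_le_right), ← inf_sup_left,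
      sup_compl_eq_top, inf_top_eq]
  have htop : k ⊤ = k α + k αᶜ := by
    rw [← hadd _ _ disjoint_compl_right, sup_compl_eq_top]
  linarith [hsplit α β, hsplit αᶜ β]

end CantorSpace

section SubseriesSum

variable {E : Type*}

noncomputable def subseriesSum [AddCommMonoid E] [TopologicalSpace E] (a : ℕ → E)
    (ε : ℕ → Bool) : E :=
  ∑' j, {j | ε j}.indicator a j

theorem subseriesSum_eq_sum [AddCommMonoid E] [TopologicalSpace E] (a : ℕ → E)
    {ε : ℕ → Bool} (hε : {j | ε j}.Finite) :
    subseriesSum a ε = ∑ j ∈ hε.toFinset, a j := by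
  rw [subseriesSum, tsum_eq_sum (s := hε.toFinset) fun j hj =>
    indicator_of_notMem (by simpa using hj) a]
  exact Finset.sum_congr rfl fun j hj => indicator_of_mem (by simpa using hj) a

theorem subseriesSum_top [AddCommMonoid E] [TopologicalSpace E] (a : ℕ → E) :
    subseriesSum a ⊤ = ∑' j, a j := by
  simp [subseriesSum]

variable [NormedAddCommGroup E] [CompleteSpace E]

theorem subseriesSum_sup {a : ℕ → E} (ha : Summable a) {ε δ : ℕ → Bool} (h : Disjoint ε δ) :
    subseriesSum a (ε ⊔ δ) = subseriesSum a ε + subseriesSum a δ := by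
  have hdisj : Disjoint {j | ε j} {j | δ j} :=
    Set.disjoint_left.2 fun j (hε : ε j) (hδ : δ j) => absurd (h.le_bot j) (by simp [hε, hδ])
  rw [subseriesSum, subseriesSum, subseriesSum, ← (ha.indicator _).tsum_add (ha.indicator _),
    ← indicator_union_of_disjoint hdisj]
  congr! 3
  ext j
  simp

theorem continuous_subseriesSum {a : ℕ → E} (ha : Summable fun j => ‖a j‖) :
    Continuous (subseriesSum a) :=
  continuous_tsum (fun j => by
    simp only [indicator_apply, mem_ofPred_eq]
    exact (continuous_of_discreteTopology (f := fun b : Bool => if b then a j else 0)).comp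
      (continuous_apply j)) ha
    fun j _ => norm_indicator_le_norm_self a j

end SubseriesSum

section WeakStarSubseriesSum

variable {X : Type*} [NormedAddCommGroup X] [NormedSpace ℝ X] [CompleteSpace X]
  {x : ℕ → StrongDual ℝ X}

noncomputable def weakStarSubseriesSum (hx : ∀ v, Summable fun j => x j v) (ε : ℕ → Bool) :
    StrongDual ℝ X :=
  continuousLinearMapOfTendsto (fun n => ∑ j ∈ Finset.range n, {j | ε j}.indicator x j)
    (f := fun v => subseriesSum (fun j => x j v) ε)
    (tendsto_pi_nhds.2 fun v => by
      convert ((hx v).indicator {j | ε j}).hasSum.tendsto_sum_nat using 2 with n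
      · rw [sum_apply]
        exact Finset.sum_congr rfl fun j _ => by by_cases hj : ε j <;> simp [hj]
      · rfl)

variable (hx : ∀ v, Summable fun j => x j v)

theorem weakStarSubseriesSum_apply (ε : ℕ → Bool) (v : X) :
    weakStarSubseriesSum hx ε v = subseriesSum (fun j => x j v) ε :=
  rfl

theorem weakStarSubseriesSum_sup {ε δ : ℕ → Bool} (h : Disjoint ε δ) :
    weakStarSubseriesSum hx (ε ⊔ δ) = weakStarSubseriesSum hx ε + weakStarSubseriesSum hx δ :=
  ContinuousLinearMap.ext fun v => subseriesSum_sup (hx v) h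

theorem weakStarSubseriesSum_eq_sum {ε : ℕ → Bool} (hε : {j | ε j}.Finite) :
    weakStarSubseriesSum hx ε = ∑ j ∈ hε.toFinset, x j :=
  ContinuousLinearMap.ext fun v => by
    rw [weakStarSubseriesSum_apply, subseriesSum_eq_sum _ hε, sum_apply]

theorem weakStarSubseriesSum_top {g : StrongDual ℝ X}
    (hg : ∀ v, HasSum (fun j => x j v) (g v)) :
    weakStarSubseriesSum (fun v => (hg v).summable) ⊤ = g :=
  ContinuousLinearMap.ext fun v => by
    rw [weakStarSubseriesSum_apply, subseriesSum_top, (hg v).tsum_eq]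

theorem continuous_weakStarSubseriesSum :
    Continuous fun ε => StrongDual.toWeakDual (weakStarSubseriesSum hx ε) :=
  WeakDual.continuous_of_continuous_eval fun v =>
    continuous_subseriesSum (summable_abs_iff.2 (hx v))

end WeakStarSubseriesSum

theorem tsum_apply_eq_apply_of_measurable {X : Type*} [NormedAddCommGroup X] [NormedSpace ℝ X]
    [CompleteSpace X] {x : ℕ → StrongDual ℝ X} {g : StrongDual ℝ X}
    (hg : ∀ v, HasSum (fun j => x j v) (g v)) {F : StrongDual ℝ (StrongDual ℝ X)}
    (hFx : Summable fun j => F (x j))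
    (hF : @Measurable (WeakDual ℝ X) ℝ (borel (WeakDual ℝ X)) Real.measurableSpace
      (fun f : WeakDual ℝ X => F (WeakDual.toStrongDual f))) :
    ∑' j, F (x j) = F g := by
  have hx : ∀ v, Summable fun j => x j v := fun v => (hg v).summable
  set φ := weakStarSubseriesSum hx
  set k : (ℕ → Bool) → ℝ := fun ε => F (φ ε) - subseriesSum (fun j => F (x j)) ε
  have hk : Measurable k := by
    have hφ : @Measurable _ _ (borel (ℕ → Bool)) (borel (WeakDual ℝ X))
        fun ε => StrongDual.toWeakDual (φ ε) :=
      (continuous_weakStarSubseriesSum hx).borel_measurable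
    have hFφ : @Measurable _ _ (borel (ℕ → Bool)) _ fun ε => F (φ ε) := hF.comp hφ
    rw [← BorelSpace.measurable_eq] at hFφ
    have hB : Continuous (subseriesSum fun j => F (x j)) :=
      continuous_subseriesSum (summable_norm_iff.2 hFx)
    exact hFφ.sub hB.measurable
  have hadd : ∀ ε δ, Disjoint ε δ → k (ε ⊔ δ) = k ε + k δ := fun ε δ h => by
    simp only [k, φ, weakStarSubseriesSum_sup hx h, map_add, subseriesSum_sup hFx h]
    ring
  have hfin : ∀ δ : ℕ → Bool, {j | δ j}.Finite → k δ = 0 := fun δ hδ => by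
    simp only [k, φ, weakStarSubseriesSum_eq_sum hx hδ, map_sum, subseriesSum_eq_sum _ hδ,
      sub_self]
  have htop := apply_top_eq_zero_of_measurable hk hadd hfin
  simp only [k, φ, weakStarSubseriesSum_top hg, subseriesSum_top] at htop
  linarith

/-- If `X` has property (X) and `F ∈ X**` is Borel measurable on `(X*, w*)`,
then `F` belongs to the canonical image of `X`. -/
theorem hasPropertyX_borel_mem_range
    (X : Type*) [NormedAddCommGroup X] [NormedSpace ℝ X] [CompleteSpace X]
    (hX : HasPropertyX X)
    (F : StrongDual ℝ (StrongDual ℝ X))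
    (hF : @Measurable (WeakDual ℝ X) ℝ (borel (WeakDual ℝ X)) Real.measurableSpace
      (fun f : WeakDual ℝ X => F (WeakDual.toStrongDual f))) :
    F ∈ Set.range (inclusionInDoubleDual ℝ X) := by
  by_contra hFX
  obtain ⟨x, g, hwuC, hg, hne⟩ := hX F hFX
  exact hne (tsum_apply_eq_apply_of_measurable hg (summable_abs_iff.1 (hwuC F)) hF)
end

section
/- Property (X) is hereditary: if a Banach space X has property (X), then every closed linear subspace of X has property (X). -/
/-!
Restriction `r : X* → S*` is surjective by Hahn–Banach, so for `F ∈ S**` outside `S` the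
functional `F ∘ r ∈ X**` lies outside `X`: if `F ∘ r` were evaluation at `x`, then `x` would be
annihilated by `S^⊥`, hence lie in the closed subspace `S`, and `F` would be evaluation at `x`.
Property (X) of `X` gives a wuC series `∑ xⱼ*` witnessing this for `F ∘ r`, and its restriction
`∑ r xⱼ*` is a wuC series in `S*` witnessing it for `F`.
-/

open NormedSpace

section

variable {𝕜 E : Type*} [RCLike 𝕜] [NormedAddCommGroup E] [NormedSpace 𝕜 E]

theorem Submodule.mem_of_forall_dual_eq_zero (S : Submodule 𝕜 E) [IsClosed (S : Set E)] {x : E}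
    (h : ∀ f : StrongDual 𝕜 E, (∀ v ∈ S, f v = 0) → f x = 0) : x ∈ S := by
  obtain ⟨g, -, hg⟩ := exists_dual_vector'' 𝕜 (Submodule.Quotient.mk x : E ⧸ S)
  have hgx : g (Submodule.Quotient.mk x) = 0 :=
    h (g ∘L S.mkQL) fun v hv => by
      simp [(Submodule.Quotient.mk_eq_zero S).mpr hv]
  rw [hgx, eq_comm, RCLike.ofReal_eq_zero] at hg
  exact (QuotientAddGroup.norm_mk_eq_zero (S := S.toAddSubgroup)).mp hg

theorem mem_range_inclusionInDoubleDual_of_comp_precomp (S : Submodule 𝕜 E)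
    (hS : IsClosed (S : Set E)) {F : StrongDual 𝕜 (StrongDual 𝕜 S)}
    (hF : F ∘L ContinuousLinearMap.precomp 𝕜 S.subtypeL ∈
      Set.range (inclusionInDoubleDual 𝕜 E)) :
    F ∈ Set.range (inclusionInDoubleDual 𝕜 S) := by
  obtain ⟨x, hx⟩ := hF
  have hFx (f : StrongDual 𝕜 E) : F (f ∘L S.subtypeL) = f x := by
    simpa using (congrArg (· f) hx).symm
  have hxS : x ∈ S := S.mem_of_forall_dual_eq_zero fun f hf => by
    rw [← hFx, show f ∘L S.subtypeL = 0 from ContinuousLinearMap.ext fun v => hf v v.2, map_zero]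
  refine ⟨⟨x, hxS⟩, ContinuousLinearMap.ext fun φ => ?_⟩
  obtain ⟨f, hfφ, -⟩ := exists_extension_norm_eq S φ
  rw [dual_def, ← hfφ, ← hFx, show f ∘L S.subtypeL = φ from ContinuousLinearMap.ext hfφ]

end

theorem hasPropertyX_hereditary_general
    (X : Type*) [NormedAddCommGroup X] [NormedSpace ℝ X]
    (hX : HasPropertyX X)
    (S : Submodule ℝ X) (hS : IsClosed (S : Set X)) :
    HasPropertyX S := by
  intro F hF
  set r : StrongDual ℝ X →L[ℝ] StrongDual ℝ S := ContinuousLinearMap.precomp ℝ S.subtypeL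
  obtain ⟨x, g, hwuC, hsum, hne⟩ :=
    hX (F ∘L r) fun h => hF (mem_range_inclusionInDoubleDual_of_comp_precomp S hS h)
  exact ⟨fun j => r (x j), r g, fun G => hwuC (G ∘L r), fun v => hsum v, hne⟩

/-- Property (X) is hereditary: it passes to closed subspaces. -/
theorem hasPropertyX_hereditary
    (X : Type*) [NormedAddCommGroup X] [NormedSpace ℝ X] [CompleteSpace X]
    (hX : HasPropertyX X)
    (S : Submodule ℝ X) (hS : IsClosed (S : Set X)) :
    HasPropertyX S :=
  hasPropertyX_hereditary_general X hX S hS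
end

section
/- Quantitative form of the main theorem: let X be a separable L-embedded Banach space with L-projection P on X** whose range is the canonical image of X, let F ∈ X** not lie in the canonical image of X, and let 0 < ε < 1. Then there exists a weakly unconditionally Cauchy series ∑ x_j* in X* with ‖∑* x_j*‖ ≤ 1 such that F(∑* x_j*) − ∑_j F(x_j*) > (1 − ε) ‖F − P F‖ > 0. -/
/-!
Put `G = F - P F`; then `P G = 0`, `F = z₀ + G` for some `z₀ ∈ X`, and `G ≠ 0`. Pick `g ∈ X*`
with `‖g‖ ≤ 1` almost norming `G` and split off the terms of the series one at a time,
`g = x₀* + ⋯ + xₙ₋₁* + hₙ`, keeping all signed sums `±x₀* ± ⋯ ± xₙ₋₁* ± hₙ` in the ball of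
radius `2 - 2⁻ⁿ`. The next term `x` must lie close to every centre `(hₙ ± U) / 2`, `U` a signed
sum of the previous terms, while `G x` and `(hₙ - x)(vᵢ)`, `i ≤ n`, are small for a dense
sequence `(vᵢ)` in `X`. The functional `Λ ↦ (P Λ)(hₙ)` on `X**` meets these demands exactly:
the L-projection identity puts it within `‖hₙ ± U‖ / 2` of each centre, and it vanishes at `G`.
A Hahn–Banach separation (a Helly-type lemma for finitely many balls) then finds such an `x` in
`X*` itself, up to any error on finitely many functionals. Bounded signed sums make the series
wuC, bounded tails vanishing on `(vᵢ)` converge weak-* to `0`, and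
`F(g) - ∑ F(xⱼ*) = G(g) - ∑ G(xⱼ*) ≥ (1 - ε/2 - ε/4) ‖G‖`.
-/

open NormedSpace Metric ContinuousLinearMap Filter Topology Finset

theorem ContinuousLinearMap.exists_norm_lt_and_mul_norm_le_apply {E : Type*}
    [NormedAddCommGroup E] [NormedSpace ℝ E] (μ : StrongDual ℝ E) {r R : ℝ}
    (hrR : r < R) (hR : 0 < R) : ∃ w : E, ‖w‖ < R ∧ r * ‖μ‖ ≤ μ w := by
  by_cases hμ : r * ‖μ‖ ≤ 0
  · exact ⟨0, by simpa using hR, by simpa using hμ⟩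
  have hμpos : 0 < ‖μ‖ := by
    by_contra h
    exact hμ (by rw [le_antisymm (not_lt.1 h) (norm_nonneg μ), mul_zero])
  have hrR' : r / R * ‖μ‖ < ‖μ‖ := by
    have : r / R < 1 := (div_lt_one hR).2 hrR
    nlinarith
  obtain ⟨x, hx1, hx⟩ :=
    ContinuousLinearMap.exists_lt_apply_of_lt_opNorm (μ : E →L[ℝ] ℝ) hrR'
  obtain ⟨x', hx'1, hx'⟩ : ∃ x' : E, ‖x'‖ = ‖x‖ ∧ μ x' = |μ x| := by
    rcases le_or_gt 0 (μ x) with h | h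
    · exact ⟨x, rfl, (abs_of_nonneg h).symm⟩
    · exact ⟨-x, norm_neg x, by rw [map_neg, abs_of_neg h]⟩
  refine ⟨R • x', ?_, ?_⟩
  · rw [norm_smul, Real.norm_of_nonneg hR.le, hx'1]
    nlinarith [norm_nonneg x]
  · rw [map_smul, smul_eq_mul, hx', ← Real.norm_eq_abs]
    rw [div_mul_eq_mul_div, div_lt_iff₀ hR] at hx
    linarith

theorem LinearMap.eq_zero_of_forall_le_apply {E : Type*} [AddCommGroup E]
    [Module ℝ E] (f : E →ₗ[ℝ] ℝ) {u : ℝ} (hf : ∀ y, u ≤ f y) : f = 0 := by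
  ext y
  by_contra hy
  have := hf (((u - 1) / f y) • y)
  rw [map_smul, smul_eq_mul, div_mul_cancel₀ _ hy] at this
  linarith

theorem ContinuousLinearMap.apply_prod_pi_eq_sum {Y ι κ : Type*} [NormedAddCommGroup Y]
    [NormedSpace ℝ Y] [Fintype ι] [DecidableEq ι] [Fintype κ] [DecidableEq κ]
    (f : StrongDual ℝ ((ι → Y) × (κ → ℝ))) (z : (ι → Y) × (κ → ℝ)) :
    f z = ∑ i, f.comp ((inl ℝ _ _).comp (single ℝ (fun _ => Y) i)) (z.1 i) +
      ∑ k, f (0, Pi.single k 1) * z.2 k := by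
  have hz : z = ∑ i, (Pi.single i (z.1 i), 0) + ∑ k, z.2 k • ((0 : ι → Y), Pi.single k 1) := by
    ext
    · simp [Prod.fst_sum, Finset.univ_sum_single]
    · simp [Prod.snd_sum, Pi.single_apply]
  conv_lhs => rw [hz]
  simp only [map_add, map_sum, map_smul, smul_eq_mul, mul_comm]
  rfl

theorem exists_comp_eq_zero_and_lt_zero_on_ball {Y E : Type*} [NormedAddCommGroup Y]
    [NormedSpace ℝ Y] [NormedAddCommGroup E] [NormedSpace ℝ E] (L : Y →L[ℝ] E) {b : E} {R : ℝ}
    (hfar : ∀ y, R ≤ ‖L y - b‖) :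
    ∃ f : StrongDual ℝ E, f.comp L = 0 ∧ ∀ z ∈ ball b R, f z < 0 := by
  have hdisj : Disjoint (ball b R) (LinearMap.range (L : Y →ₗ[ℝ] E)) := by
    rw [Set.disjoint_right]
    rintro _ ⟨y, rfl⟩ hy
    exact (hfar y).not_gt (mem_ball_iff_norm.1 hy)
  obtain ⟨f, u, hfb, hfL⟩ :=
    geometric_hahn_banach_open (convex_ball b R) isOpen_ball (Submodule.convex _) hdisj
  have hu : u ≤ 0 := by simpa using hfL 0 (Submodule.zero_mem _)
  exact ⟨f, ContinuousLinearMap.coe_injective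
    (LinearMap.eq_zero_of_forall_le_apply (f.comp L : Y →ₗ[ℝ] ℝ) fun y => hfL _ ⟨y, rfl⟩),
    fun z hz => (hfb z hz).trans_le hu⟩

theorem exists_forall_norm_sub_lt_of_norm_sub_inclusionInDoubleDual_le {Y ι κ : Type*}
    [NormedAddCommGroup Y] [NormedSpace ℝ Y] [Finite ι] [Finite κ]
    (Φ : StrongDual ℝ (StrongDual ℝ Y)) (a : ι → Y) {r R : ℝ} (hrR : r < R) (hR : 0 < R)
    (ha : ∀ i, ‖Φ - inclusionInDoubleDual ℝ Y (a i)‖ ≤ r) (T : κ → StrongDual ℝ Y) :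
    ∃ y, (∀ i, ‖y - a i‖ < R) ∧ ∀ k, |T k y - Φ (T k)| < R := by
  classical
  cases nonempty_fintype ι; cases nonempty_fintype κ
  by_contra! hfar
  let L : Y →L[ℝ] (ι → Y) × (κ → ℝ) :=
    (ContinuousLinearMap.pi fun _ => ContinuousLinearMap.id ℝ Y).prod (ContinuousLinearMap.pi T)
  let b : (ι → Y) × (κ → ℝ) := (a, fun k => Φ (T k))
  obtain ⟨f, hfL, hfb⟩ := exists_comp_eq_zero_and_lt_zero_on_ball L (b := b) (R := R) fun y => by
    by_contra! hy
    rw [Prod.norm_def, max_lt_iff, pi_norm_lt_iff hR, pi_norm_lt_iff hR] at hy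
    obtain ⟨k, hk⟩ := hfar y hy.1
    exact hk.not_gt (by simpa [L, b, Real.norm_eq_abs] using hy.2 k)
  set μ : ι → StrongDual ℝ Y := fun i =>
    f.comp ((ContinuousLinearMap.inl ℝ _ _).comp (ContinuousLinearMap.single ℝ (fun _ => Y) i))
  set c : κ → ℝ := fun k => f (0, Pi.single k 1)
  have hfL_sum : f.comp L = ∑ i, μ i + ∑ k, c k • T k := by
    ext y
    rw [ContinuousLinearMap.comp_apply, f.apply_prod_pi_eq_sum]
    simp [L]
    rfl
  -- Applying `Φ` to `f ∘ L = 0` cancels the `T`-part of `f b`.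
  have hfb_eq : f b = ∑ i, (inclusionInDoubleDual ℝ Y (a i) - Φ) (μ i) := by
    have hΦ := congrArg Φ hfL_sum
    rw [hfL, map_zero, map_add, map_sum, map_sum] at hΦ
    rw [f.apply_prod_pi_eq_sum]
    simp only [b, map_smul, smul_eq_mul, sub_apply, dual_def, Finset.sum_sub_distrib] at hΦ ⊢
    linarith
  choose w hw hμw using fun i => (μ i).exists_norm_lt_and_mul_norm_le_apply hrR hR
  have hmem : b + (w, 0) ∈ ball b R := by
    rw [mem_ball_iff_norm, add_sub_cancel_left, Prod.norm_mk, norm_zero, max_lt_iff,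
      pi_norm_lt_iff hR]
    exact ⟨hw, hR⟩
  refine (hfb _ hmem).not_ge ?_
  rw [map_add, hfb_eq, f.apply_prod_pi_eq_sum (w, 0)]
  simp only [Pi.zero_apply, mul_zero, Finset.sum_const_zero, add_zero, ← Finset.sum_add_distrib]
  refine Finset.sum_nonneg fun i _ => ?_
  have h1 : |(inclusionInDoubleDual ℝ Y (a i) - Φ) (μ i)| ≤ r * ‖μ i‖ := by
    rw [← Real.norm_eq_abs, ← norm_neg, ← neg_apply, neg_sub]
    exact ((Φ - inclusionInDoubleDual ℝ Y (a i)).le_opNorm (μ i)).trans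
      (mul_le_mul_of_nonneg_right (ha i) (norm_nonneg _))
  linarith [hμw i, neg_abs_le ((inclusionInDoubleDual ℝ Y (a i) - Φ) (μ i))]

theorem exists_forall_norm_sub_lt_and_abs_sub_lt {Y ι κ : Type*}
    [NormedAddCommGroup Y] [NormedSpace ℝ Y] [Finite ι] [Finite κ]
    (Φ : StrongDual ℝ (StrongDual ℝ Y)) (a : ι → Y) {r R : ℝ} (hrR : r < R) (hR : 0 < R)
    (ha : ∀ i, ‖Φ - inclusionInDoubleDual ℝ Y (a i)‖ ≤ r) (T : κ → StrongDual ℝ Y)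
    {η : ℝ} (hη : 0 < η) :
    ∃ y, (∀ i, ‖y - a i‖ < R) ∧ ∀ k, |T k y - Φ (T k)| < η := by
  obtain ⟨y, hya, hyT⟩ := exists_forall_norm_sub_lt_of_norm_sub_inclusionInDoubleDual_le
    Φ a hrR hR ha fun k => (R / η) • T k
  refine ⟨y, hya, fun k => ?_⟩
  have hk := hyT k
  rw [smul_apply, map_smul, smul_eq_mul, smul_eq_mul, ← mul_sub, abs_mul,
    abs_of_pos (div_pos hR hη), div_mul_eq_mul_div, div_lt_iff₀ hη] at hk
  nlinarith

theorem norm_sub_inclusionInDoubleDual_le_max {Y : Type*} [NormedAddCommGroup Y]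
    [NormedSpace ℝ Y] {P : StrongDual ℝ Y →L[ℝ] StrongDual ℝ Y}
    (hL : ∀ F, ‖P F‖ + ‖F - P F‖ = ‖F‖) {h : Y} {Φ : StrongDual ℝ (StrongDual ℝ Y)}
    (hΦ : ∀ F, Φ F = P F h) (a : Y) :
    ‖Φ - inclusionInDoubleDual ℝ Y a‖ ≤ max ‖h - a‖ ‖a‖ := by
  refine opNorm_le_bound _ ((norm_nonneg _).trans (le_max_left _ _)) fun F => ?_
  have hsplit : (Φ - inclusionInDoubleDual ℝ Y a) F = P F (h - a) - (F - P F) a := by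
    simp only [sub_apply, hΦ, dual_def, map_sub]
    ring
  rw [hsplit, ← hL F, mul_add, mul_comm _ ‖P F‖, mul_comm _ ‖F - P F‖]
  refine (norm_sub_le _ _).trans (add_le_add ?_ ?_)
  · exact (le_opNorm _ _).trans (mul_le_mul_of_nonneg_left (le_max_left _ _) (norm_nonneg _))
  · exact (le_opNorm _ _).trans (mul_le_mul_of_nonneg_left (le_max_right _ _) (norm_nonneg _))

section SignedSums

open Pointwise

variable {Y : Type*}

theorem norm_add_le_and_norm_sub_le_of_add_pair_subset_closedBall [SeminormedAddCommGroup Y]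
    {S : Set Y} {h U : Y} {ρ : ℝ} (hSh : S + {h, -h} ⊆ closedBall 0 ρ) (hU : U ∈ S) :
    ‖h + U‖ ≤ ρ ∧ ‖h - U‖ ≤ ρ := by
  have hplus := hSh (Set.add_mem_add hU (Set.mem_insert h _))
  have hminus := hSh (Set.add_mem_add hU (Set.mem_insert_of_mem h (Set.mem_singleton (-h))))
  rw [mem_closedBall_zero_iff] at hplus hminus
  rw [← sub_eq_add_neg] at hminus
  exact ⟨add_comm h U ▸ hplus, norm_sub_rev h U ▸ hminus⟩

theorem norm_le_of_add_pair_subset_closedBall [NormedAddCommGroup Y] [NormedSpace ℝ Y]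
    {S : Set Y} {h U : Y} {ρ : ℝ} (hSh : S + {h, -h} ⊆ closedBall 0 ρ) (hU : U ∈ S) :
    ‖U‖ ≤ ρ := by
  obtain ⟨hplus, hminus⟩ := norm_add_le_and_norm_sub_le_of_add_pair_subset_closedBall hSh hU
  calc ‖U‖ = ‖(2⁻¹ : ℝ) • ((h + U) - (h - U))‖ := by congr 1; module
    _ = 2⁻¹ * ‖(h + U) - (h - U)‖ := by rw [norm_smul, Real.norm_of_nonneg (by norm_num)]
    _ ≤ 2⁻¹ * (ρ + ρ) := by gcongr; exact (norm_sub_le _ _).trans (add_le_add hplus hminus)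
    _ = ρ := by ring

theorem add_pair_add_pair_subset_closedBall [NormedAddCommGroup Y] [NormedSpace ℝ Y]
    {S : Set Y} {h x : Y} {ρ ρ' : ℝ} (hρ : ρ ≤ ρ') (hSh : S + {h, -h} ⊆ closedBall 0 ρ)
    (hx : ∀ U ∈ S, ‖x - (2⁻¹ : ℝ) • (h + U)‖ ≤ ρ' / 2 ∧ ‖x - (2⁻¹ : ℝ) • (h - U)‖ ≤ ρ' / 2) :
    S + {x, -x} + {h - x, -(h - x)} ⊆ closedBall 0 ρ' := by
  have hdouble : ∀ c : Y, ‖x - c‖ ≤ ρ' / 2 → ‖(2 : ℝ) • (x - c)‖ ≤ ρ' := fun c hc => by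
    rw [norm_smul, Real.norm_two]
    linarith
  rintro _ ⟨_, ⟨U, hU, e, he, rfl⟩, f, hf, rfl⟩
  rw [Set.mem_insert_iff, Set.mem_singleton_iff, eq_comm] at he hf
  have hUh := norm_add_le_and_norm_sub_le_of_add_pair_subset_closedBall hSh hU
  rw [mem_closedBall_zero_iff]
  dsimp only
  rcases he with rfl | rfl <;> rcases hf with rfl | rfl
  · rw [show U + x + (h - x) = h + U by abel]
    linarith [hUh.1]
  · rw [show U + x + -(h - x) = (2 : ℝ) • (x - (2⁻¹ : ℝ) • (h - U)) by module]
    exact hdouble _ (hx U hU).2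
  · rw [show U + -x + (h - x) = -((2 : ℝ) • (x - (2⁻¹ : ℝ) • (h + U))) by module, norm_neg]
    exact hdouble _ (hx U hU).1
  · rw [show U + -x + -(h - x) = -(h - U) by abel, norm_neg]
    linarith [hUh.2]

theorem exists_split_of_add_pair_subset_closedBall {κ : Type*} [NormedAddCommGroup Y]
    [NormedSpace ℝ Y] [Finite κ] {P : StrongDual ℝ Y →L[ℝ] StrongDual ℝ Y}
    (hL : ∀ F, ‖P F‖ + ‖F - P F‖ = ‖F‖) {S : Set Y} (hS : S.Finite) {h : Y} {ρ ρ' : ℝ}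
    (hρ0 : 0 ≤ ρ) (hρ : ρ < ρ') (hSh : S + {h, -h} ⊆ closedBall 0 ρ)
    (T : κ → StrongDual ℝ Y) {η : ℝ} (hη : 0 < η) :
    ∃ x, S + {x, -x} + {h - x, -(h - x)} ⊆ closedBall 0 ρ' ∧ ∀ k, |T k x - P (T k) h| < η := by
  let Φ : StrongDual ℝ (StrongDual ℝ Y) := (inclusionInDoubleDual ℝ Y h).comp P
  have hhalf : ∀ v : Y, ‖v‖ ≤ ρ → ‖(2⁻¹ : ℝ) • v‖ ≤ ρ / 2 := fun v hv => by
    rw [norm_smul]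
    norm_num
    linarith
  let A : Set Y := (fun U => (2⁻¹ : ℝ) • (h + U)) '' S ∪ (fun U => (2⁻¹ : ℝ) • (h - U)) '' S
  have hΦA : ∀ c ∈ A, ‖Φ - inclusionInDoubleDual ℝ Y c‖ ≤ ρ / 2 := by
    rintro c (⟨U, hU, rfl⟩ | ⟨U, hU, rfl⟩) <;>
      have hUh := norm_add_le_and_norm_sub_le_of_add_pair_subset_closedBall hSh hU <;>
      refine (norm_sub_inclusionInDoubleDual_le_max hL (fun _ => rfl) _).trans (max_le ?_ ?_)
    · rw [show h - (2⁻¹ : ℝ) • (h + U) = (2⁻¹ : ℝ) • (h - U) by module]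
      exact hhalf _ hUh.2
    · exact hhalf _ hUh.1
    · rw [show h - (2⁻¹ : ℝ) • (h - U) = (2⁻¹ : ℝ) • (h + U) by module]
      exact hhalf _ hUh.1
    · exact hhalf _ hUh.2
  have : Finite A := ((hS.image _).union (hS.image _)).to_subtype
  obtain ⟨x, hxA, hxT⟩ := exists_forall_norm_sub_lt_and_abs_sub_lt Φ (fun c : A => (c : Y))
    (by linarith : ρ / 2 < ρ' / 2) (by linarith) (fun c => hΦA c c.2) T hη
  refine ⟨x, add_pair_add_pair_subset_closedBall hρ.le hSh fun U hU => ⟨?_, ?_⟩, hxT⟩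
  · exact (hxA ⟨_, Or.inl ⟨U, hU, rfl⟩⟩).le
  · exact (hxA ⟨_, Or.inr ⟨U, hU, rfl⟩⟩).le

theorem exists_seq_of_forall_exists_split [AddCommGroup Y] (p : ℕ → Set Y → Y → Prop)
    (q : ℕ → Y → Y → Prop) {g : Y} (h0 : p 0 {0} g)
    (hstep : ∀ n S h, p n S h → ∃ x, p (n + 1) (S + {x, -x}) (h - x) ∧ q n h x) :
    ∃ x : ℕ → Y, ∀ n, (∃ S, (∀ e : ℕ → Y, (∀ j, e j = x j ∨ e j = -x j) →
      ∑ j ∈ range n, e j ∈ S) ∧ p n S (g - ∑ j ∈ range n, x j)) ∧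
      q n (g - ∑ j ∈ range n, x j) (x n) := by
  choose! next hnext using hstep
  let state : ℕ → Set Y × Y := fun n =>
    Nat.rec ({0}, g) (fun n s => (s.1 + {next n s.1 s.2, -next n s.1 s.2},
      s.2 - next n s.1 s.2)) n
  let x : ℕ → Y := fun n => next n (state n).1 (state n).2
  have htail : ∀ n, (state n).2 = g - ∑ j ∈ range n, x j := by
    intro n
    induction n with
    | zero => simp [state]
    | succ n ih => rw [sum_range_succ, ← sub_sub, ← ih]
  have hgood : ∀ n, p n (state n).1 (state n).2 := by
    intro n
    induction n with
    | zero => exact h0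
    | succ n ih => exact (hnext n _ _ ih).1
  have hsigned : ∀ n (e : ℕ → Y), (∀ j, e j = x j ∨ e j = -x j) →
      ∑ j ∈ range n, e j ∈ (state n).1 := by
    intro n e he
    induction n with
    | zero => simp [state]
    | succ n ih =>
      rw [sum_range_succ]
      exact Set.add_mem_add ih (he n)
  refine ⟨x, fun n => ⟨⟨(state n).1, fun e he => hsigned n e he, htail n ▸ hgood n⟩, ?_⟩⟩
  exact htail n ▸ (hnext n _ _ (hgood n)).2

end SignedSums

open Pointwise in
theorem exists_seq_bounded_signed_sums {Y : Type*} [NormedAddCommGroup Y] [NormedSpace ℝ Y]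
    {P : StrongDual ℝ Y →L[ℝ] StrongDual ℝ Y} (hL : ∀ F, ‖P F‖ + ‖F - P F‖ = ‖F‖)
    {g : Y} (hg : ‖g‖ ≤ 1) {G : StrongDual ℝ Y} (hPG : P G = 0)
    {T : ℕ → StrongDual ℝ Y} (hPT : ∀ i, P (T i) = T i) {η : ℕ → ℝ} (hη : ∀ n, 0 < η n)
    (hη_lim : Tendsto η atTop (𝓝 0)) :
    ∃ x : ℕ → Y, (∀ n (e : ℕ → Y), (∀ j, e j = x j ∨ e j = -x j) → ‖∑ j ∈ range n, e j‖ ≤ 2) ∧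
      (∀ n, |G (x n)| < η n) ∧
      ∀ i, Tendsto (fun n => T i (g - ∑ j ∈ range n, x j)) atTop (𝓝 0) := by
  let ρ : ℕ → ℝ := fun n => 2 - 2⁻¹ ^ n
  have hρ_lt : ∀ n, ρ n < ρ (n + 1) := fun n => by
    simp only [ρ, pow_succ]
    linarith [pow_pos (by norm_num : (0 : ℝ) < 2⁻¹) n]
  have hρ_nonneg : ∀ n, 0 ≤ ρ n := fun n => by
    simp only [ρ]
    linarith [pow_le_one₀ (by norm_num : (0 : ℝ) ≤ 2⁻¹) (by norm_num) (n := n)]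
  obtain ⟨x, hx⟩ := exists_seq_of_forall_exists_split (g := g)
    (fun n (S : Set Y) (h : Y) => S.Finite ∧ S + {h, -h} ⊆ closedBall 0 (ρ n))
    (fun n (h x : Y) => |G x| < η n ∧ ∀ i ≤ n, |T i (h - x)| < η n)
    ⟨Set.finite_singleton 0, by norm_num [Set.insert_subset_iff, ρ, hg]⟩ fun n S h hSh => by
      obtain ⟨x, hsub, hx⟩ := exists_split_of_add_pair_subset_closedBall hL hSh.1
        (hρ_nonneg n) (hρ_lt n) hSh.2 (fun o : Option (Fin (n + 1)) => o.elim G fun i => T i)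
        (hη n)
      refine ⟨x, ⟨hSh.1.add (by simp), hsub⟩, ?_, fun i hi => ?_⟩
      · simpa [hPG] using hx none
      · simpa [hPT, abs_sub_comm] using hx (some ⟨i, Nat.lt_succ_of_le hi⟩)
  refine ⟨x, fun n e he => ?_, fun n => (hx n).2.1, fun i => ?_⟩
  · obtain ⟨⟨S, hsigned, -, hS⟩, -⟩ := hx n
    exact (norm_le_of_add_pair_subset_closedBall hS (hsigned e he)).trans
      (show ρ n ≤ 2 from sub_le_self 2 (by positivity))
  · rw [← tendsto_add_atTop_iff_nat 1]
    refine squeeze_zero_norm' ?_ hη_lim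
    filter_upwards [eventually_ge_atTop i] with n hn
    simpa [sum_range_succ, sub_sub] using ((hx n).2.2 i hn).le

theorem summable_abs_apply_of_norm_sum_le {E : Type*} [SeminormedAddCommGroup E]
    [NormedSpace ℝ E] {x : ℕ → E} {C : ℝ}
    (hx : ∀ n (e : ℕ → E), (∀ j, e j = x j ∨ e j = -x j) → ‖∑ j ∈ range n, e j‖ ≤ C)
    (H : StrongDual ℝ E) : Summable fun j => |H (x j)| := by
  refine summable_of_sum_range_le (c := ‖H‖ * C) (fun _ => abs_nonneg _) fun n => ?_
  let e : ℕ → E := fun j => if 0 ≤ H (x j) then x j else -x j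
  have he : ∀ j, |H (x j)| = H (e j) := fun j => by
    by_cases hj : 0 ≤ H (x j) <;> simp [e, hj, abs_of_nonneg, abs_of_neg, not_le.1]
  calc ∑ j ∈ range n, |H (x j)| = H (∑ j ∈ range n, e j) := by simp only [he, map_sum]
    _ ≤ ‖H‖ * ‖∑ j ∈ range n, e j‖ := (le_abs_self _).trans (H.le_opNorm _)
    _ ≤ ‖H‖ * C := by
        gcongr
        exact hx n e fun j => by by_cases hj : 0 ≤ H (x j) <;> simp [e, hj]

theorem tendsto_apply_of_norm_le_of_denseRange {E ι α : Type*} [NormedAddCommGroup E]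
    [NormedSpace ℝ E] {l : Filter ι} {f : ι → StrongDual ℝ E} {C : ℝ} (hf : ∀ i, ‖f i‖ ≤ C)
    (g : StrongDual ℝ E) {v : α → E} (hv : DenseRange v)
    (hfv : ∀ k, Tendsto (fun i => f i (v k)) l (𝓝 (g (v k)))) (w : E) :
    Tendsto (fun i => f i w) l (𝓝 (g w)) := by
  have hequi : Equicontinuous ((↑) ∘ f) :=
    ((NormedSpace.equicontinuous_TFAE f).out 5 1).1 (⟨C, hf⟩ : ∃ C, ∀ i, ‖f i‖ ≤ C)
  exact hv.induction_on w (hequi.isClosed_setOfPred_tendsto g.continuous) hfv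

theorem hasSum_apply_of_norm_sum_le_of_denseRange {E α : Type*} [NormedAddCommGroup E]
    [NormedSpace ℝ E] {x : ℕ → StrongDual ℝ E} {g : StrongDual ℝ E} {C : ℝ}
    (hC : ∀ n, ‖∑ j ∈ range n, x j‖ ≤ C) (hx : ∀ w, Summable fun j => x j w)
    {v : α → E} (hv : DenseRange v)
    (htail : ∀ k, Tendsto (fun n => (g - ∑ j ∈ range n, x j) (v k)) atTop (𝓝 0)) (w : E) :
    HasSum (fun j => x j w) (g w) := by
  refine (hx w).hasSum_iff_tendsto_nat.2 ?_
  simp_rw [← _root_.sum_apply]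
  refine tendsto_apply_of_norm_le_of_denseRange hC g hv (fun k => ?_) w
  simpa using (tendsto_const_nhds (x := g (v k))).sub (htail k)

theorem separable_LEmbedded_quantitative_general
    (X : Type*) [NormedAddCommGroup X] [NormedSpace ℝ X]
    [TopologicalSpace.SeparableSpace X]
    (P : StrongDual ℝ (StrongDual ℝ X) →L[ℝ] StrongDual ℝ (StrongDual ℝ X))
    (hproj : ∀ F, P (P F) = P F)
    (hrange : Set.range P = Set.range (inclusionInDoubleDual ℝ X))
    (hL : ∀ F : StrongDual ℝ (StrongDual ℝ X), ‖P F‖ + ‖F - P F‖ = ‖F‖)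
    (F : StrongDual ℝ (StrongDual ℝ X)) (hF : F ∉ Set.range (inclusionInDoubleDual ℝ X))
    (ε : ℝ) (hε0 : 0 < ε) (hε1 : ε < 1) :
    ∃ (x : ℕ → StrongDual ℝ X) (g : StrongDual ℝ X),
      (∀ G : StrongDual ℝ (StrongDual ℝ X), Summable fun j => |G (x j)|) ∧
      (∀ v : X, HasSum (fun j => (x j) v) (g v)) ∧
      ‖g‖ ≤ 1 ∧
      F g - ∑' j, F (x j) > (1 - ε) * ‖F - P F‖ ∧
      (1 - ε) * ‖F - P F‖ > 0 := by
  have hPJ : ∀ w : X, P (inclusionInDoubleDual ℝ X w) = inclusionInDoubleDual ℝ X w := fun w => by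
    obtain ⟨F', hF'⟩ : inclusionInDoubleDual ℝ X w ∈ Set.range P := hrange ▸ ⟨w, rfl⟩
    rw [← hF', hproj]
  obtain ⟨z₀, hz₀⟩ : P F ∈ Set.range (inclusionInDoubleDual ℝ X) := hrange ▸ ⟨F, rfl⟩
  set G := F - P F with hG
  have hPG : P G = 0 := by rw [hG, map_sub P, hproj, sub_self]
  have hG0 : 0 < ‖G‖ := norm_pos_iff.2 fun h0 => hF ⟨z₀, hz₀.trans (sub_eq_zero.1 h0).symm⟩
  have hF_apply : ∀ y, F y = y z₀ + G y := fun y => by simp [hG, ← hz₀]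
  obtain ⟨g, hg1, hgG⟩ :=
    G.exists_norm_lt_and_mul_norm_le_apply (by linarith : 1 - ε / 2 < 1) one_pos
  obtain ⟨v, hv⟩ := TopologicalSpace.exists_dense_seq X
  let η : ℕ → ℝ := fun n => ε * ‖G‖ / 4 / 2 / 2 ^ n
  have hη : Summable η := summable_geometric_two' _
  obtain ⟨x, hsigned, hGx, htail⟩ := exists_seq_bounded_signed_sums hL hg1.le hPG
    (T := fun i => inclusionInDoubleDual ℝ X (v i)) (fun i => hPJ _) (η := η)
    (fun n => by positivity) hη.tendsto_atTop_zero
  have hwuC := summable_abs_apply_of_norm_sum_le hsigned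
  have hsum : ∀ w, HasSum (fun j => x j w) (g w) :=
    hasSum_apply_of_norm_sum_le_of_denseRange (fun n => hsigned n x fun _ => Or.inl rfl)
      (fun w => (hwuC (inclusionInDoubleDual ℝ X w)).of_abs) hv htail
  have hGsum : ∑' j, G (x j) ≤ ε * ‖G‖ / 4 :=
    ((hwuC G).of_abs.tsum_le_tsum (fun j => (le_abs_self _).trans (hGx j).le) hη).trans_eq
      (tsum_geometric_two' _)
  have htsum : ∑' j, F (x j) = g z₀ + ∑' j, G (x j) := by
    simp_rw [hF_apply]
    rw [(hsum z₀).summable.tsum_add (hwuC G).of_abs, (hsum z₀).tsum_eq]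
  refine ⟨x, g, hwuC, hsum, hg1.le, ?_, mul_pos (by linarith) hG0⟩
  rw [hF_apply g, htsum]
  nlinarith

/-- Quantitative form of the main theorem: for a separable L-embedded Banach space
`X` with L-projection `P`, any `F ∈ X** \ X` and any `0 < ε < 1` there is a weakly
unconditionally Cauchy series `∑ xⱼ*` in `X*` whose weak-* sum `g` has norm at most
one, with `F(g) - ∑ F(xⱼ*) > (1 - ε) ‖F - P F‖ > 0`. -/
theorem separable_LEmbedded_quantitative
    (X : Type*) [NormedAddCommGroup X] [NormedSpace ℝ X] [CompleteSpace X]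
    [TopologicalSpace.SeparableSpace X]
    (P : StrongDual ℝ (StrongDual ℝ X) →L[ℝ] StrongDual ℝ (StrongDual ℝ X))
    (hproj : ∀ F, P (P F) = P F)
    (hrange : Set.range P = Set.range (inclusionInDoubleDual ℝ X))
    (hL : ∀ F : StrongDual ℝ (StrongDual ℝ X), ‖P F‖ + ‖F - P F‖ = ‖F‖)
    (F : StrongDual ℝ (StrongDual ℝ X)) (hF : F ∉ Set.range (inclusionInDoubleDual ℝ X))
    (ε : ℝ) (hε0 : 0 < ε) (hε1 : ε < 1) :
    ∃ (x : ℕ → StrongDual ℝ X) (g : StrongDual ℝ X),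
      (∀ G : StrongDual ℝ (StrongDual ℝ X), Summable fun j => |G (x j)|) ∧
      (∀ v : X, HasSum (fun j => (x j) v) (g v)) ∧
      ‖g‖ ≤ 1 ∧
      F g - ∑' j, F (x j) > (1 - ε) * ‖F - P F‖ ∧
      (1 - ε) * ‖F - P F‖ > 0 :=
  separable_LEmbedded_quantitative_general X P hproj hrange hL F hF ε hε0 hε1
end

section
/- Let X be a separable L-embedded Banach space with L-projection P on X** whose range is the canonical image of X, and set X_s = ker P. If x̃_s ∈ X_s is nonzero and attains its norm on X*, i.e. there exists x* ∈ X* with ‖x*‖ = 1 and x̃_s(x*) = ‖x̃_s‖, then there exists a weakly unconditionally Cauchy series ∑ x_j* in X* whose weak-* sum ∑* x_j* has norm 1 and satisfies x̃_s(∑* x_j*) = ‖x̃_s‖ while ∑_j x̃_s(x_j*) = 0. -/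
/-!
Fix a dense sequence `(dᵢ)` in `X`. We build `u₀ = x*, u₁, u₂, … ∈ X*` with `x̃ₛ(uⱼ) = ‖x̃ₛ‖`,
`uⱼ(dᵢ) = 0` for `i < j`, and all alternating sums `∑_{k ∈ F} ±u_k` of norm at most `2`; then
`xⱼ = uⱼ - uⱼ₊₁` works. Indeed `x̃ₛ(xⱼ) = 0`; the partial sums `x* - u_N` converge weak-* to `x*`
because the bounded `u_N` vanish on longer and longer initial pieces of the dense sequence; and by
Abel summation every signed partial sum of `∑ xⱼ` is a combination of three alternating sums, so
the series is weakly unconditionally Cauchy.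

For the next term after `l₀, …, lₙ`, the functional `Λ = lₙ ∘ (I - P)` on `X**` sends `x̃ₛ` to
`‖x̃ₛ‖` and vanishes on `X`, and the L-decomposition `‖G‖ = ‖PG‖ + ‖G - PG‖` places it within the
current bound `D` of every alternating sum `S` (as `S` and `S - lₙ` both are alternating sums).
A Helly-type lemma, proved by Hahn–Banach separation, realises `Λ` by some `u ∈ X*` up to `ε` in
these finitely many distances while matching it exactly on finitely many functionals.
-/

open NormedSpace Finset

section Helly

variable {Y : Type*} [NormedAddCommGroup Y] [NormedSpace ℝ Y]

/-- The closed `δ`-ball around `Λ ∈ Y**` lies in the weak-* closed convex hull of `C ⊆ Y`,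
expressed through the support function of `C`. -/
def IsDeepIn (δ : ℝ) (Λ : StrongDual ℝ (StrongDual ℝ Y)) (C : Set Y) : Prop :=
  ∀ (h : StrongDual ℝ Y) (s : ℝ), (∀ u ∈ C, h u ≤ s) → Λ h + δ * ‖h‖ ≤ s

theorem add_mul_norm_le_of_forall_mem_ball {h : StrongDual ℝ Y} {S : Y} {ρ s : ℝ} (hρ : 0 < ρ)
    (hs : ∀ u ∈ Metric.ball S ρ, h u ≤ s) : h S + ρ * ‖h‖ ≤ s := by
  have hmem : ∀ x : Y, ‖x‖ < 1 → S + ρ • x ∈ Metric.ball S ρ := fun x hx => by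
    rw [Metric.mem_ball, dist_eq_norm, add_sub_cancel_left, norm_smul, Real.norm_of_nonneg hρ.le]
    exact mul_lt_of_lt_one_right hρ hx
  suffices ‖h‖ ≤ (s - h S) / ρ by rw [le_div_iff₀ hρ] at this; linarith
  refine le_of_forall_lt fun c hc => ?_
  obtain ⟨x, hx, hcx⟩ := h.exists_lt_apply_of_lt_opNorm hc
  have hplus := hs _ (hmem x hx)
  have hminus := hs _ (hmem (-x) (by rwa [norm_neg]))
  simp only [map_add, map_smul, map_neg, smul_eq_mul] at hplus hminus
  rw [lt_div_iff₀ hρ]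
  rw [Real.norm_eq_abs, lt_abs] at hcx
  rcases hcx with hcx | hcx <;> nlinarith

theorem isDeepIn_ball {δ r : ℝ} (hδ : 0 < δ) {Λ : StrongDual ℝ (StrongDual ℝ Y)} {S : Y}
    (hΛ : ‖Λ - inclusionInDoubleDual ℝ Y S‖ ≤ r) : IsDeepIn δ Λ (Metric.ball S (r + δ)) := by
  intro h s hs
  have hr : 0 ≤ r := (ContinuousLinearMap.opNorm_nonneg _).trans hΛ
  have hball := add_mul_norm_le_of_forall_mem_ball (by linarith) hs
  have hΛh : Λ h - h S ≤ r * ‖h‖ := calc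
    Λ h - h S = (Λ - inclusionInDoubleDual ℝ Y S) h := by simp
    _ ≤ ‖Λ - inclusionInDoubleDual ℝ Y S‖ * ‖h‖ :=
      (Real.le_norm_self _).trans (ContinuousLinearMap.le_opNorm _ _)
    _ ≤ r * ‖h‖ := by gcongr
  linarith

/-- The support function of `A ∩ B` is the infimal convolution of those of `A` and `B`. -/
theorem exists_add_le_add_of_le_on_inter {A B : Set Y} (hAo : IsOpen A) (hAc : Convex ℝ A)
    (hBc : Convex ℝ B) {c₀ : Y} (hc₀ : c₀ ∈ A ∩ B) {h : StrongDual ℝ Y} {s : ℝ}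
    (hs : ∀ u ∈ A ∩ B, h u ≤ s) :
    ∃ k : StrongDual ℝ Y, ∀ a ∈ A, ∀ b ∈ B, h a + k a ≤ s + k b := by
  -- separate the strict hypograph of `h - s` over `A` from `B × [0, ∞)` in `Y × ℝ`
  set A' : Set (Y × ℝ) := {p | p.1 ∈ A ∧ p.2 < h p.1 - s}
  have hA'o : IsOpen A' :=
    (hAo.preimage continuous_fst).inter (isOpen_lt continuous_snd (by fun_prop))
  have hA'c : Convex ℝ A' :=
    ((h : Y →ₗ[ℝ] ℝ).concaveOn hAc |>.sub (convexOn_const s hAc)).convex_strict_hypograph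
  have hdisj : Disjoint A' (B ×ˢ Set.Ici 0) := by
    refine Set.disjoint_left.2 fun p ⟨hpA, hpρ⟩ ⟨hpB, hp0⟩ => ?_
    have := hs p.1 ⟨hpA, hpB⟩
    simp only [Set.mem_Ici] at hp0 hpρ
    linarith
  obtain ⟨f, w, hfA, hfB⟩ := geometric_hahn_banach_open hA'c hA'o (hBc.prod (convex_Ici 0)) hdisj
  set τ := f (0, 1)
  have hf : ∀ y ρ, f (y, ρ) = f (y, 0) + ρ * τ := fun y ρ => by
    rw [← smul_eq_mul, ← map_smul, ← map_add]; simp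
  have hA'f : ∀ a ∈ A, ∀ ρ < h a - s, f (a, 0) + ρ * τ < w := fun a ha ρ hρ => by
    rw [← hf]; exact hfA (a, ρ) ⟨ha, hρ⟩
  have hBf : ∀ b ∈ B, w ≤ f (b, 0) := fun b hb => by
    simpa using hfB (b, 0) ⟨hb, Set.self_mem_Ici⟩
  have hτ : 0 < τ := by
    have hc₀s := hs c₀ hc₀
    have := hA'f c₀ hc₀.1 (h c₀ - s - 1) (by linarith)
    nlinarith [hBf c₀ hc₀.2]
  refine ⟨τ⁻¹ • f.comp (ContinuousLinearMap.inl ℝ Y ℝ), fun a ha b hb => ?_⟩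
  have key : h a - s ≤ (f (b, 0) - f (a, 0)) / τ := le_of_forall_lt fun ρ hρ => by
    rw [lt_div_iff₀ hτ]
    linarith [hA'f a ha ρ hρ, hBf b hb]
  rw [sub_div, div_eq_inv_mul, div_eq_inv_mul] at key
  simp only [smul_apply, ContinuousLinearMap.comp_apply, ContinuousLinearMap.inl_apply,
    smul_eq_mul]
  linarith

namespace IsDeepIn

variable {δ : ℝ} {Λ : StrongDual ℝ (StrongDual ℝ Y)} {A B : Set Y}

theorem mono (hA : IsDeepIn δ Λ A) (hAB : A ⊆ B) : IsDeepIn δ Λ B :=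
  fun h s hs => hA h s fun u hu => hs u (hAB hu)

theorem nonempty (hA : IsDeepIn δ Λ A) : A.Nonempty := by
  by_contra hA'
  have := hA 0 (-1) (by simp_all [Set.not_nonempty_iff_eq_empty])
  norm_num at this

theorem inter_nonempty (hδ : 0 < δ) (hAo : IsOpen A) (hAc : Convex ℝ A) (hBc : Convex ℝ B)
    (hA : IsDeepIn δ Λ A) (hB : IsDeepIn δ Λ B) : (A ∩ B).Nonempty := by
  rw [Set.nonempty_iff_ne_empty, Ne, ← Set.disjoint_iff_inter_eq_empty]
  intro hdisj
  obtain ⟨f, w, hfA, hfB⟩ := geometric_hahn_banach_open hAc hAo hBc hdisj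
  have hAf := hA f w fun a ha => (hfA a ha).le
  have hBf := hB (-f) (-w) fun b hb => by simpa using hfB b hb
  rw [map_neg, norm_neg] at hBf
  have hf : f = 0 := norm_le_zero_iff.1 (by nlinarith [norm_nonneg f])
  obtain ⟨a, ha⟩ := hA.nonempty
  obtain ⟨b, hb⟩ := hB.nonempty
  have hfa := hfA a ha
  have hfb := hfB b hb
  rw [hf, zero_apply] at hfa hfb
  linarith

theorem inter (hδ : 0 < δ) (hAo : IsOpen A) (hAc : Convex ℝ A) (hBc : Convex ℝ B)
    (hA : IsDeepIn δ Λ A) (hB : IsDeepIn δ Λ B) : IsDeepIn δ Λ (A ∩ B) := by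
  intro h s hs
  obtain ⟨c₀, hc₀⟩ := inter_nonempty hδ hAo hAc hBc hA hB
  obtain ⟨k, hk⟩ := exists_add_le_add_of_le_on_inter hAo hAc hBc hc₀ hs
  have hAk : ∀ b ∈ B, Λ (h + k) + δ * ‖h + k‖ ≤ s + k b := fun b hb =>
    hA _ _ fun a ha => by simpa using hk a ha b hb
  have hBk := hB (-k) (s - Λ (h + k) - δ * ‖h + k‖) fun b hb => by
    have := hAk b hb
    simp only [neg_apply]
    linarith
  simp only [map_neg, norm_neg, map_add] at hBk
  have hnorm : ‖h‖ ≤ ‖h + k‖ + ‖k‖ := by simpa using norm_sub_le (h + k) k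
  have := mul_le_mul_of_nonneg_left hnorm hδ.le
  linarith

theorem biInter {ι : Type*} (hδ : 0 < δ) (t : Finset ι) {C : ι → Set Y}
    (hCo : ∀ i ∈ t, IsOpen (C i)) (hCc : ∀ i ∈ t, Convex ℝ (C i))
    (hC : ∀ i ∈ t, IsDeepIn δ Λ (C i)) : IsDeepIn δ Λ (⋂ i ∈ t, C i) := by
  classical
  induction t using Finset.induction_on with
  | empty =>
    simpa using (isDeepIn_ball hδ (S := 0) (r := ‖Λ‖)
      (by rw [map_zero]; exact (congrArg _ (sub_zero Λ)).le)).mono (Set.subset_univ _)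
  | insert a t hat ih =>
    simp only [Finset.mem_insert, forall_eq_or_imp] at hCo hCc hC
    rw [Finset.set_biInter_insert]
    exact hC.1.inter hδ hCo.1 hCc.1 (convex_iInter₂ hCc.2) (ih hCo.2 hCc.2 hC.2)

theorem mem_closure_image (hδ : 0 ≤ δ) {K : Set Y} (hK : IsDeepIn δ Λ K) (hKc : Convex ℝ K)
    {F : Type*} [NormedAddCommGroup F] [NormedSpace ℝ F] (q : Y →L[ℝ] F) {c : F}
    (hc : ∀ f : StrongDual ℝ F, Λ (f.comp q) = f c) : c ∈ closure (q '' K) := by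
  by_contra hcK
  obtain ⟨f, s, hfK, hfc⟩ := geometric_hahn_banach_closed_point
    (hKc.linear_image (q : Y →ₗ[ℝ] F)).closure isClosed_closure hcK
  have := hK (f.comp q) s fun u hu => (hfK _ (subset_closure ⟨u, hu, rfl⟩)).le
  rw [hc] at this
  linarith [mul_nonneg hδ (norm_nonneg (f.comp q))]

end IsDeepIn

theorem ContinuousLinearMap.exists_preimage_norm_le_of_mem_range {F : Type*}
    [NormedAddCommGroup F] [NormedSpace ℝ F] [FiniteDimensional ℝ F] (q : Y →L[ℝ] F) :
    ∃ M, ∀ y ∈ LinearMap.range (q : Y →ₗ[ℝ] F), ∃ z, q z = y ∧ ‖z‖ ≤ M * ‖y‖ := by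
  obtain ⟨g, hg⟩ := q.rangeRestrict.exists_rightInverse_of_surjective (by simp)
  refine ⟨‖g‖, fun y hy => ⟨g ⟨y, hy⟩, ?_, g.le_opNorm _⟩⟩
  exact congrArg Subtype.val (ContinuousLinearMap.ext_iff.1 hg ⟨y, hy⟩)

theorem apply_comp_pi {κ : Type*} [Fintype κ] (Λ : StrongDual ℝ (StrongDual ℝ Y))
    (g : κ → StrongDual ℝ Y) (f : StrongDual ℝ (κ → ℝ)) :
    Λ (f.comp (ContinuousLinearMap.pi g)) = f fun j => Λ (g j) := by
  classical
  set e : κ → κ → ℝ := fun j i => if j = i then 1 else 0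
  have hf : ∀ y, f y = ∑ j, y j * f (e j) := (f : (κ → ℝ) →ₗ[ℝ] ℝ).pi_apply_eq_sum_univ
  have : f.comp (ContinuousLinearMap.pi g) = ∑ j, f (e j) • g j := by
    ext u
    rw [ContinuousLinearMap.comp_apply, hf]
    simp [mul_comm]
  rw [this, map_sum, hf]
  simp [mul_comm]

/-- Helly's lemma, with finitely many simultaneous ball constraints. -/
theorem exists_approx_of_bidual {Λ : StrongDual ℝ (StrongDual ℝ Y)} {ι κ : Type*} [Fintype κ]
    (t : Finset ι) (S : ι → Y) (r : ι → ℝ)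
    (hr : ∀ i ∈ t, ‖Λ - inclusionInDoubleDual ℝ Y (S i)‖ ≤ r i) (g : κ → StrongDual ℝ Y)
    {ε : ℝ} (hε : 0 < ε) :
    ∃ u : Y, (∀ j, g j u = Λ (g j)) ∧ ∀ i ∈ t, ‖u - S i‖ ≤ r i + ε := by
  set q := ContinuousLinearMap.pi g
  set c : κ → ℝ := fun j => Λ (g j)
  set K := ⋂ i ∈ t, Metric.ball (S i) (r i + ε / 2)
  have hK : IsDeepIn (ε / 2) Λ K := IsDeepIn.biInter (by positivity) t
    (fun _ _ => Metric.isOpen_ball) (fun _ _ => convex_ball _ _)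
    (fun i hi => isDeepIn_ball (by positivity) (hr i hi))
  have hcK : c ∈ closure (q '' K) := hK.mem_closure_image (by positivity)
    (convex_iInter₂ fun _ _ => convex_ball _ _) q (apply_comp_pi Λ g)
  have hcq : c ∈ LinearMap.range (q : Y →ₗ[ℝ] (κ → ℝ)) := by
    refine (Submodule.closed_of_finiteDimensional _).closure_subset_iff.2 ?_ hcK
    rintro _ ⟨u, -, rfl⟩
    exact LinearMap.mem_range_self _ u
  -- shift a point `u ∈ K` with `q u ≈ c` by a short `z` to get `q (u + z) = c`
  obtain ⟨M, hM⟩ := q.exists_preimage_norm_le_of_mem_range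
  obtain ⟨_, ⟨u, huK, rfl⟩, hu⟩ := Metric.mem_closure_iff.1 hcK (ε / 2 / (|M| + 1)) (by positivity)
  obtain ⟨z, hz, hzM⟩ := hM (c - q u) (Submodule.sub_mem _ hcq (LinearMap.mem_range_self _ u))
  have hzε : ‖z‖ ≤ ε / 2 := calc
    ‖z‖ ≤ M * ‖c - q u‖ := hzM
    _ ≤ (|M| + 1) * (ε / 2 / (|M| + 1)) := by
      rw [← dist_eq_norm]
      gcongr
      linarith [le_abs_self M]
    _ = ε / 2 := by field_simp
  refine ⟨u + z, fun j => ?_, fun i hi => ?_⟩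
  · simpa [q] using congrFun (show q (u + z) = c by rw [map_add, hz, add_sub_cancel]) j
  · have hui : ‖u - S i‖ < r i + ε / 2 := by
      simpa [dist_eq_norm] using Set.mem_iInter₂.1 huK i hi
    calc ‖u + z - S i‖ = ‖(u - S i) + z‖ := by rw [add_sub_right_comm]
      _ ≤ ‖u - S i‖ + ‖z‖ := norm_add_le _ _
      _ ≤ r i + ε := by linarith

end Helly


section AlternatingSum

variable {E : Type*}

/-- `∑_{k ∈ F} ± l k`, with sign `+` at the largest index of `F` and alternating downwards. -/
noncomputable def altSum [AddCommGroup E] [Module ℝ E] (l : ℕ → E) (F : Finset ℕ) : E :=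
  ∑ k ∈ F, (-1 : ℝ) ^ (F.filter (k < ·)).card • l k

section Module

variable [AddCommGroup E] [Module ℝ E]

@[simp] theorem altSum_empty (l : ℕ → E) : altSum l ∅ = 0 := by simp [altSum]

theorem altSum_congr {l l' : ℕ → E} {F : Finset ℕ} (h : ∀ k ∈ F, l k = l' k) :
    altSum l F = altSum l' F :=
  sum_congr rfl fun k hk => by rw [h k hk]

theorem altSum_insert (l : ℕ → E) {F : Finset ℕ} {n : ℕ} (hF : ∀ k ∈ F, k < n) :
    altSum l (insert n F) = l n - altSum l F := by
  have hn : n ∉ F := fun h => lt_irrefl n (hF n h)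
  have htop : (insert n F).filter (n < ·) = ∅ :=
    filter_eq_empty_iff.2 fun j hj => by
      rcases mem_insert.1 hj with rfl | hj
      · exact lt_irrefl j
      · exact (hF j hj).not_gt
  have hbelow : ∀ k ∈ F, ((insert n F).filter (k < ·)).card = (F.filter (k < ·)).card + 1 :=
    fun k hk => by
      rw [filter_insert, if_pos (hF k hk), card_insert_of_notMem fun h => hn (mem_filter.1 h).1]
  rw [altSum, sum_insert hn, htop, card_empty, pow_zero, one_smul, sub_eq_add_neg, altSum,
    ← sum_neg_distrib]
  congr 1
  refine sum_congr rfl fun k hk => ?_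
  rw [hbelow k hk, pow_succ, mul_neg_one, neg_smul]

theorem altSum_singleton (l : ℕ → E) (n : ℕ) : altSum l {n} = l n := by
  simpa using altSum_insert l (F := ∅) (n := n) (by simp)

theorem exists_altSum_eq_sub (l : ℕ → E) {n : ℕ} {F : Finset ℕ} (hF : F ⊆ range (n + 1)) :
    ∃ F' ⊆ range (n + 1), altSum l F' = l n - altSum l F := by
  have hlt : ∀ G ⊆ range (n + 1), n ∉ G → ∀ k ∈ G, k < n := fun G hG hnG k hk =>
    lt_of_le_of_ne (Nat.lt_succ_iff.1 (mem_range.1 (hG hk))) fun h => hnG (h ▸ hk)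
  by_cases hn : n ∈ F
  · refine ⟨F.erase n, (erase_subset n F).trans hF, ?_⟩
    conv_rhs => rw [← insert_erase hn]
    rw [altSum_insert l (hlt _ ((erase_subset n F).trans hF) (notMem_erase n F)), sub_sub_cancel]
  · exact ⟨insert n F, insert_subset (self_mem_range_succ n) hF, altSum_insert l (hlt F hF hn)⟩

/-- Abel summation of `∑ η j • (u j - u (j + 1))`: the indices where the sign `η` flips carry
alternating signs. -/
theorem exists_sum_smul_sub_eq_altSum (u : ℕ → E) {η : ℕ → ℝ}
    (hη : ∀ j, η (j + 1) = η j ∨ η (j + 1) = -η j) (N : ℕ) :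
    ∃ F ⊆ range (N + 1), ∑ j ∈ range (N + 1), η j • (u j - u (j + 1)) =
      η N • (altSum u (insert 0 F) + altSum u F - u (N + 1)) := by
  induction N with
  | zero => exact ⟨∅, empty_subset _, by simp [altSum_singleton]⟩
  | succ N ih =>
    obtain ⟨F, hF, hsum⟩ := ih
    have hlt : ∀ k ∈ insert 0 F, k < N + 1 := fun k hk => by
      rcases mem_insert.1 hk with rfl | hk
      · exact N.succ_pos
      · exact mem_range.1 (hF hk)
    rw [sum_range_succ, hsum]
    rcases hη N with hsame | hflip
    · refine ⟨F, hF.trans (range_subset_range.2 (Nat.le_succ _)), ?_⟩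
      rw [hsame]
      module
    · refine ⟨insert (N + 1) F, insert_subset (self_mem_range_succ _)
        (hF.trans (range_subset_range.2 (Nat.le_succ _))), ?_⟩
      rw [insert_comm, altSum_insert u hlt,
        altSum_insert u fun k hk => hlt k (mem_insert_of_mem hk), hflip]
      module

end Module

variable [SeminormedAddCommGroup E] [NormedSpace ℝ E] {u : ℕ → E} {C : ℝ}

theorem norm_sum_smul_sub_le (hC : ∀ F, ‖altSum u F‖ ≤ C) {η : ℕ → ℝ} (hη : ∀ j, |η j| = 1)
    (N : ℕ) : ‖∑ j ∈ range N, η j • (u j - u (j + 1))‖ ≤ 3 * C := by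
  have hC0 : 0 ≤ C := by simpa using hC ∅
  rcases N with _ | N
  · simpa using hC0
  have hsign : ∀ j, η (j + 1) = η j ∨ η (j + 1) = -η j := fun j =>
    abs_eq_abs.1 ((hη (j + 1)).trans (hη j).symm)
  obtain ⟨F, -, hsum⟩ := exists_sum_smul_sub_eq_altSum u hsign N
  have hu := hC {N + 1}
  rw [altSum_singleton] at hu
  rw [hsum, norm_smul, Real.norm_eq_abs, hη, one_mul]
  calc ‖altSum u (insert 0 F) + altSum u F - u (N + 1)‖
      ≤ ‖altSum u (insert 0 F)‖ + ‖altSum u F‖ + ‖u (N + 1)‖ := norm_sub_le_of_le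
        (norm_add_le _ _) le_rfl
    _ ≤ 3 * C := by linarith [hC (insert 0 F), hC F]

theorem summable_abs_apply_sub_of_norm_altSum_le (hC : ∀ F, ‖altSum u F‖ ≤ C)
    (G : StrongDual ℝ E) : Summable fun j => |G (u j - u (j + 1))| := by
  set a : ℕ → ℝ := fun j => G (u j - u (j + 1))
  refine summable_of_sum_range_le (c := ‖G‖ * (3 * C)) (fun _ => abs_nonneg _) fun N => ?_
  set η : ℕ → ℝ := fun j => if 0 ≤ a j then 1 else -1
  have hη : ∀ j, |η j| = 1 := fun j => by unfold η; split_ifs <;> simp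
  have habs : ∀ j, |a j| = η j * a j := fun j => by
    unfold η
    split_ifs with h
    · rw [abs_of_nonneg h, one_mul]
    · rw [abs_of_neg (not_le.1 h), neg_one_mul]
  calc ∑ j ∈ range N, |a j| = G (∑ j ∈ range N, η j • (u j - u (j + 1))) := by
        simp only [habs, map_sum, map_smul, smul_eq_mul, a]
    _ ≤ ‖G‖ * ‖∑ j ∈ range N, η j • (u j - u (j + 1))‖ :=
        (Real.le_norm_self _).trans (G.le_opNorm _)
    _ ≤ ‖G‖ * (3 * C) := by gcongr; exact norm_sum_smul_sub_le hC hη N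

end AlternatingSum

theorem tendsto_apply_zero_of_eq_zero_denseRange {X : Type*} [SeminormedAddCommGroup X]
    [NormedSpace ℝ X] {u : ℕ → StrongDual ℝ X} {C : ℝ} (hC : ∀ n, ‖u n‖ ≤ C) {d : ℕ → X}
    (hd : DenseRange d) (hzero : ∀ n, ∀ i < n, u n (d i) = 0) (v : X) :
    Filter.Tendsto (fun n => u n v) Filter.atTop (nhds 0) := by
  rw [Metric.tendsto_atTop]
  intro ε hε
  have hC0 : 0 ≤ C := (norm_nonneg _).trans (hC 0)
  obtain ⟨i, hi⟩ := hd.exists_dist_lt v (show 0 < ε / (C + 1) by positivity)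
  refine ⟨i + 1, fun n hn => ?_⟩
  rw [dist_eq_norm] at hi
  calc dist (u n v) 0 = ‖u n (v - d i)‖ := by
        rw [map_sub, hzero n i hn, sub_zero, dist_zero_right]
    _ ≤ C * ‖v - d i‖ := (u n).le_of_opNorm_le (hC n) _
    _ ≤ (C + 1) * ‖v - d i‖ := by gcongr; linarith
    _ < ε := by rwa [lt_div_iff₀' (by positivity)] at hi

theorem exists_seq_forall_of_exists_update {α : Type*} (Q : ℕ → (ℕ → α) → Prop)
    (hlocal : ∀ n l l', (∀ k ≤ n, l k = l' k) → Q n l → Q n l')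
    (hzero : ∃ l, Q 0 l) (hstep : ∀ n l, Q n l → ∃ a, Q (n + 1) (Function.update l (n + 1) a)) :
    ∃ u : ℕ → α, ∀ n, Q n u := by
  obtain ⟨l₀, hl₀⟩ := hzero
  have hstep' : ∀ n l, ∃ a, Q n l → Q (n + 1) (Function.update l (n + 1) a) := fun n l => by
    by_cases h : Q n l
    · exact (hstep n l h).imp fun _ ha _ => ha
    · exact ⟨l (n + 1), fun h' => absurd h' h⟩
  choose next hnext using hstep'
  let f : ℕ → ℕ → α := fun n => Nat.rec l₀ (fun n l => Function.update l (n + 1) (next n l)) n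
  have hf : ∀ n, Q n (f n) := fun n => by
    induction n with
    | zero => exact hl₀
    | succ n ih => exact hnext n (f n) ih
  have hstable : ∀ n, ∀ k ≤ n, f n k = f k k := fun n => by
    induction n with
    | zero => intro k hk; rw [Nat.le_zero.1 hk]
    | succ n ih =>
      intro k hk
      rcases Nat.le_succ_iff.1 hk with hk | rfl
      · rw [← ih k hk]
        exact Function.update_of_ne (by omega) _ _
      · rfl
  exact ⟨fun k => f k k, fun n => hlocal n (f n) _ (hstable n) (hf n)⟩

section LProjection

variable {X : Type*} [NormedAddCommGroup X] [NormedSpace ℝ X]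
  (P : StrongDual ℝ (StrongDual ℝ X) →L[ℝ] StrongDual ℝ (StrongDual ℝ X))

/-- `l ∈ X*` evaluated on the `ker P` component of `X**`. -/
noncomputable def singularEval (l : StrongDual ℝ X) :=
  inclusionInDoubleDual ℝ (StrongDual ℝ X) l - (inclusionInDoubleDual ℝ (StrongDual ℝ X) l).comp P

@[simp] theorem singularEval_apply (l : StrongDual ℝ X) (G : StrongDual ℝ (StrongDual ℝ X)) :
    singularEval P l G = (G - P G) l := rfl

variable {P}

theorem norm_singularEval_sub_le (hL : ∀ F, ‖P F‖ + ‖F - P F‖ = ‖F‖) {l S : StrongDual ℝ X}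
    {D : ℝ} (hS : ‖S‖ ≤ D) (hSl : ‖S - l‖ ≤ D) :
    ‖singularEval P l - inclusionInDoubleDual ℝ (StrongDual ℝ X) S‖ ≤ D := by
  refine ContinuousLinearMap.opNorm_le_bound _ ((norm_nonneg _).trans hS) fun G => ?_
  have hsplit : (singularEval P l - inclusionInDoubleDual ℝ (StrongDual ℝ X) S) G =
      -(P G S + (G - P G) (S - l)) := by
    simp only [sub_apply, singularEval_apply, NormedSpace.dual_def, map_sub]
    ring
  rw [hsplit, norm_neg]
  calc ‖P G S + (G - P G) (S - l)‖ ≤ ‖P G‖ * ‖S‖ + ‖G - P G‖ * ‖S - l‖ :=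
        (norm_add_le _ _).trans (add_le_add ((P G).le_opNorm _) ((G - P G).le_opNorm _))
    _ ≤ ‖P G‖ * D + ‖G - P G‖ * D := by gcongr
    _ = D * ‖G‖ := by rw [← hL G]; ring

theorem exists_next_of_lProjection (hproj : ∀ F, P (P F) = P F)
    (hrange : Set.range P = Set.range (inclusionInDoubleDual ℝ X))
    (hL : ∀ F, ‖P F‖ + ‖F - P F‖ = ‖F‖) {xs : StrongDual ℝ (StrongDual ℝ X)} (hxs : P xs = 0)
    {l : ℕ → StrongDual ℝ X} {n : ℕ} {D : ℝ} (hl : xs (l n) = ‖xs‖)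
    (hD : ∀ F ⊆ range (n + 1), ‖altSum l F‖ ≤ D) (d : ℕ → X) {ε : ℝ} (hε : 0 < ε) :
    ∃ u : StrongDual ℝ X, xs u = ‖xs‖ ∧ (∀ i < n + 1, u (d i) = 0) ∧
      ∀ F ⊆ range (n + 1), ‖u - altSum l F‖ ≤ D + ε := by
  have hr : ∀ F ∈ (range (n + 1)).powerset,
      ‖singularEval P (l n) - inclusionInDoubleDual ℝ _ (altSum l F)‖ ≤ D := fun F hF => by
    rw [mem_powerset] at hF
    obtain ⟨F', hF', hF'eq⟩ := exists_altSum_eq_sub l hF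
    refine norm_singularEval_sub_le hL (hD F hF) ?_
    rw [← norm_neg, neg_sub, ← hF'eq]
    exact hD F' hF'
  have hfix : ∀ x : X, P (inclusionInDoubleDual ℝ X x) = inclusionInDoubleDual ℝ X x := by
    intro x
    obtain ⟨G, hG⟩ : inclusionInDoubleDual ℝ X x ∈ Set.range P := hrange ▸ Set.mem_range_self x
    rw [← hG, hproj]
  obtain ⟨u, hu, hudist⟩ := exists_approx_of_bidual _ _ _ hr
    (fun j : Option (Fin (n + 1)) => j.elim xs fun i => inclusionInDoubleDual ℝ X (d i)) hε
  refine ⟨u, ?_, fun i hi => ?_, fun F hF => hudist F (mem_powerset.2 hF)⟩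
  · simpa [hxs, hl] using hu none
  · simpa [hfix] using hu (some ⟨i, hi⟩)

end LProjection

section Construction

variable {X : Type*} [NormedAddCommGroup X] [NormedSpace ℝ X]
  {xs : StrongDual ℝ (StrongDual ℝ X)} {x' : StrongDual ℝ X} {d : ℕ → X}

/-- The first `n + 1` terms of the sequence under construction; the bound `2 - 2⁻ⁿ` leaves room
for the errors `2⁻⁽ⁿ⁺¹⁾` of the later steps. -/
structure Admissible (xs : StrongDual ℝ (StrongDual ℝ X)) (x' : StrongDual ℝ X) (d : ℕ → X)
    (n : ℕ) (l : ℕ → StrongDual ℝ X) : Prop where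
  zero_eq : l 0 = x'
  apply_eq_norm : ∀ j ≤ n, xs (l j) = ‖xs‖
  apply_eq_zero : ∀ j ≤ n, ∀ i < j, l j (d i) = 0
  norm_altSum_le : ∀ F ⊆ range (n + 1), ‖altSum l F‖ ≤ 2 - (1 / 2) ^ n

theorem Admissible.congr {n : ℕ} {l l' : ℕ → StrongDual ℝ X} (h : ∀ k ≤ n, l k = l' k)
    (hl : Admissible xs x' d n l) : Admissible xs x' d n l' where
  zero_eq := h 0 n.zero_le ▸ hl.zero_eq
  apply_eq_norm j hj := h j hj ▸ hl.apply_eq_norm j hj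
  apply_eq_zero j hj := h j hj ▸ hl.apply_eq_zero j hj
  norm_altSum_le F hF := by
    rw [← altSum_congr fun k hk => h k (Nat.lt_succ_iff.1 (mem_range.1 (hF hk)))]
    exact hl.norm_altSum_le F hF

theorem admissible_zero (hx' : ‖x'‖ = 1) (hxs : xs x' = ‖xs‖) :
    Admissible xs x' d 0 fun _ => x' where
  zero_eq := rfl
  apply_eq_norm _ _ := hxs
  apply_eq_zero j hj i hi := absurd hi (by omega)
  norm_altSum_le F hF := by
    rcases subset_singleton_iff.1 (range_one ▸ hF) with rfl | rfl
    · norm_num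
    · norm_num [altSum_singleton, hx']

theorem Admissible.exists_update
    {P : StrongDual ℝ (StrongDual ℝ X) →L[ℝ] StrongDual ℝ (StrongDual ℝ X)}
    (hproj : ∀ F, P (P F) = P F) (hrange : Set.range P = Set.range (inclusionInDoubleDual ℝ X))
    (hL : ∀ F, ‖P F‖ + ‖F - P F‖ = ‖F‖) (hxs : P xs = 0) {n : ℕ} {l : ℕ → StrongDual ℝ X}
    (hl : Admissible xs x' d n l) :
    ∃ a, Admissible xs x' d (n + 1) (Function.update l (n + 1) a) := by
  obtain ⟨a, ha, hda, hdist⟩ := exists_next_of_lProjection hproj hrange hL hxs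
    (hl.apply_eq_norm n le_rfl) hl.norm_altSum_le d (by positivity : (0 : ℝ) < (1 / 2) ^ (n + 1))
  have hbelow : ∀ k ≤ n, Function.update l (n + 1) a k = l k := fun k hk =>
    Function.update_of_ne (by omega) _ _
  refine ⟨a, ⟨?_, fun j hj => ?_, fun j hj => ?_, fun F hF => ?_⟩⟩
  · rw [hbelow 0 n.zero_le, hl.zero_eq]
  · rcases Nat.le_succ_iff.1 hj with hj | rfl
    · rw [hbelow j hj, hl.apply_eq_norm j hj]
    · rwa [Function.update_self]
  · rcases Nat.le_succ_iff.1 hj with hj | rfl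
    · rw [hbelow j hj]; exact hl.apply_eq_zero j hj
    · rw [Function.update_self]; exact hda
  have hstep : (2 : ℝ) - (1 / 2) ^ n + (1 / 2) ^ (n + 1) = 2 - (1 / 2) ^ (n + 1) := by ring
  have hlow : ∀ G ⊆ range (n + 2), n + 1 ∉ G → G ⊆ range (n + 1) := fun G hG hn k hk =>
    mem_range.2 (lt_of_le_of_ne (Nat.lt_succ_iff.1 (mem_range.1 (hG hk))) fun h => hn (h ▸ hk))
  have hsame : ∀ G ⊆ range (n + 1), altSum (Function.update l (n + 1) a) G = altSum l G :=
    fun G hG => altSum_congr fun k hk => hbelow k (Nat.lt_succ_iff.1 (mem_range.1 (hG hk)))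
  by_cases hn : n + 1 ∈ F
  · have hF' := hlow _ ((erase_subset _ F).trans hF) (notMem_erase _ F)
    rw [← insert_erase hn, altSum_insert _ fun k hk => mem_range.1 (hF' hk), hsame _ hF',
      Function.update_self, ← hstep]
    exact hdist _ hF'
  · rw [hsame F (hlow F hF hn)]
    refine (hl.norm_altSum_le F (hlow F hF hn)).trans ?_
    linarith [pow_pos (by norm_num : (0 : ℝ) < 1 / 2) (n + 1)]

theorem exists_forall_admissible
    {P : StrongDual ℝ (StrongDual ℝ X) →L[ℝ] StrongDual ℝ (StrongDual ℝ X)}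
    (hproj : ∀ F, P (P F) = P F) (hrange : Set.range P = Set.range (inclusionInDoubleDual ℝ X))
    (hL : ∀ F, ‖P F‖ + ‖F - P F‖ = ‖F‖) (hxs : P xs = 0) (hx' : ‖x'‖ = 1)
    (hxsx' : xs x' = ‖xs‖) (d : ℕ → X) :
    ∃ u : ℕ → StrongDual ℝ X, ∀ n, Admissible xs x' d n u :=
  exists_seq_forall_of_exists_update _ (fun _ _ _ h hl => hl.congr h)
    ⟨_, admissible_zero hx' hxsx'⟩ fun _ _ hl => hl.exists_update hproj hrange hL hxs

end Construction

theorem separable_LEmbedded_norm_attaining_singular_general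
    (X : Type*) [NormedAddCommGroup X] [NormedSpace ℝ X]
    [TopologicalSpace.SeparableSpace X]
    (P : StrongDual ℝ (StrongDual ℝ X) →L[ℝ] StrongDual ℝ (StrongDual ℝ X))
    (hproj : ∀ F, P (P F) = P F)
    (hrange : Set.range P = Set.range (inclusionInDoubleDual ℝ X))
    (hL : ∀ F : StrongDual ℝ (StrongDual ℝ X), ‖P F‖ + ‖F - P F‖ = ‖F‖)
    (xs : StrongDual ℝ (StrongDual ℝ X)) (hxs_ker : P xs = 0)
    (x' : StrongDual ℝ X) (hx'_norm : ‖x'‖ = 1) (hattain : xs x' = ‖xs‖) :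
    ∃ (x : ℕ → StrongDual ℝ X) (g : StrongDual ℝ X),
      (∀ G : StrongDual ℝ (StrongDual ℝ X), Summable fun j => |G (x j)|) ∧
      (∀ v : X, HasSum (fun j => (x j) v) (g v)) ∧
      ‖g‖ = 1 ∧ xs g = ‖xs‖ ∧ (∑' j, xs (x j)) = 0 := by
  obtain ⟨d, hd⟩ := TopologicalSpace.exists_dense_seq X
  obtain ⟨u, hu⟩ := exists_forall_admissible hproj hrange hL hxs_ker hx'_norm hattain d
  have hbound : ∀ F, ‖altSum u F‖ ≤ 2 := fun F => by
    have hF : F ⊆ range (F.sup id + 1) := fun k hk =>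
      mem_range.2 (Nat.lt_succ_of_le (le_sup (f := id) hk))
    linarith [(hu _).norm_altSum_le F hF, pow_pos (by norm_num : (0 : ℝ) < 1 / 2) (F.sup id)]
  have hwuC := summable_abs_apply_sub_of_norm_altSum_le hbound
  refine ⟨fun j => u j - u (j + 1), x', hwuC, fun v => ?_, hx'_norm, hattain, ?_⟩
  · have hlim := tendsto_apply_zero_of_eq_zero_denseRange
      (fun n => by simpa [altSum_singleton] using hbound {n}) hd
      (fun n => (hu n).apply_eq_zero n le_rfl) v
    rw [hasSum_iff_tendsto_nat_of_summable_norm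
      (by simpa using hwuC (inclusionInDoubleDual ℝ X v))]
    simp only [sub_apply, sum_range_sub']
    simpa [(hu 0).zero_eq] using tendsto_const_nhds.sub hlim
  · simp [(hu _).apply_eq_norm _ le_rfl]

/-- For a separable L-embedded Banach space `X` with L-projection `P` and
`X_s = ker P`: if `x̃ₛ ∈ X_s` is nonzero and attains its norm on some norm-one
`x* ∈ X*`, then there is a weakly unconditionally Cauchy series `∑ xⱼ*` in `X*`
whose weak-* sum `g` has norm one with `x̃ₛ(g) = ‖x̃ₛ‖` while `∑ x̃ₛ(xⱼ*) = 0`. -/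
theorem separable_LEmbedded_norm_attaining_singular
    (X : Type*) [NormedAddCommGroup X] [NormedSpace ℝ X] [CompleteSpace X]
    [TopologicalSpace.SeparableSpace X]
    (P : StrongDual ℝ (StrongDual ℝ X) →L[ℝ] StrongDual ℝ (StrongDual ℝ X))
    (hproj : ∀ F, P (P F) = P F)
    (hrange : Set.range P = Set.range (inclusionInDoubleDual ℝ X))
    (hL : ∀ F : StrongDual ℝ (StrongDual ℝ X), ‖P F‖ + ‖F - P F‖ = ‖F‖)
    (xs : StrongDual ℝ (StrongDual ℝ X)) (hxs_ker : P xs = 0) (hxs_ne : xs ≠ 0)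
    (x' : StrongDual ℝ X) (hx'_norm : ‖x'‖ = 1) (hattain : xs x' = ‖xs‖) :
    ∃ (x : ℕ → StrongDual ℝ X) (g : StrongDual ℝ X),
      (∀ G : StrongDual ℝ (StrongDual ℝ X), Summable fun j => |G (x j)|) ∧
      (∀ v : X, HasSum (fun j => (x j) v) (g v)) ∧
      ‖g‖ = 1 ∧ xs g = ‖xs‖ ∧ (∑' j, xs (x j)) = 0 :=
  separable_LEmbedded_norm_attaining_singular_general X P hproj hrange hL xs hxs_ker x' hx'_norm
    hattain
end

section
/- Let z₀ : [0,1] → ℝ be defined by z₀(t) = 1 if t is rational and z₀(t) = −1 if t is irrational. Then for every continuous function z : [0,1] → ℝ one has sup_{t ∈ [0,1]} |z(t) + z₀(t)| = (sup_{t ∈ [0,1]} |z(t)|) + 1; that is, in the supremum norm the distance exhibits the ℓ¹-additivity ‖z + z₀‖_∞ = ‖z‖_∞ + ‖z₀‖_∞. -/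
/-!
The bound `≤` is the triangle inequality. For `≥`, let `M` be the left-hand side. The rationals
and the irrationals are both dense in `[0,1]`, so by continuity `|z t + 1| ≤ M` and `|z t - 1| ≤ M`
hold at every `t`, and `max |a + 1| |a - 1| = |a| + 1`.
-/

open scoped Classical

open Set

theorem max_abs_add_abs_sub {α : Type*} [AddCommGroup α] [LinearOrder α] [IsOrderedAddMonoid α]
    (a b : α) : max |a + b| |a - b| = |a| + |b| := by
  grind [abs_eq_max_neg]

theorem Dense.subtype_Icc {α : Type*} [TopologicalSpace α] [LinearOrder α] [OrderTopology α]
    [DenselyOrdered α] {a b : α} (hab : a < b) {D : Set α} (hD : Dense D) :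
    Dense {t : Icc a b | (t : α) ∈ D} := by
  intro t
  rw [closure_subtype]
  have hIcc : Icc a b ⊆ closure (Ioo a b ∩ D) := by
    rw [← closure_Ioo hab.ne]
    exact closure_minimal (hD.open_subset_closure_inter isOpen_Ioo) isClosed_closure
  refine closure_mono ?_ (hIcc t.2)
  rintro x ⟨hx, hxD⟩
  exact ⟨⟨x, Ioo_subset_Icc_self hx⟩, hxD, rfl⟩

theorem iSup_abs_add_sign_of_dense {X : Type*} [TopologicalSpace X] [Nonempty X] {s : Set X}
    [DecidablePred (· ∈ s)] (hs : Dense s) (hsc : Dense sᶜ) {z : X → ℝ} (hz : Continuous z)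
    (hbdd : BddAbove (range fun t => |z t|)) :
    ⨆ t, |z t + (if t ∈ s then 1 else -1)| = (⨆ t, |z t|) + 1 := by
  have hsign (t : X) : |(if t ∈ s then 1 else -1 : ℝ)| = 1 := by split_ifs <;> simp
  have upper (t : X) : |z t + (if t ∈ s then 1 else -1)| ≤ (⨆ t, |z t|) + 1 :=
    (abs_add_le _ _).trans (by rw [hsign]; exact add_le_add_left (le_ciSup hbdd t) 1)
  refine le_antisymm (ciSup_le upper) ?_
  set M := ⨆ t, |z t + (if t ∈ s then 1 else -1)|
  have le_M (t : X) : |z t + (if t ∈ s then 1 else -1)| ≤ M :=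
    le_ciSup ⟨_, forall_mem_range.2 upper⟩ t
  have plus (t : X) : |z t + 1| ≤ M :=
    le_on_closure (f := fun t => |z t + 1|) (fun t ht => by simpa [if_pos ht] using le_M t)
      (by fun_prop) continuousOn_const (hs.closure_eq ▸ mem_univ t)
  have minus (t : X) : |z t - 1| ≤ M :=
    le_on_closure (f := fun t => |z t - 1|)
      (fun t ht => by simpa [sub_eq_add_neg, if_neg ht] using le_M t) (by fun_prop)
      continuousOn_const (hsc.closure_eq ▸ mem_univ t)
  rw [← le_sub_iff_add_le]
  refine ciSup_le fun t => le_sub_iff_add_le.2 ?_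
  simpa [max_abs_add_abs_sub] using max_le (plus t) (minus t)

/-- The ±1-valued function on `[0,1]` which is `1` at rationals and `-1` at
irrationals is L-direct to `C([0,1])` in the sup norm:
`‖z + z₀‖_∞ = ‖z‖_∞ + 1` for every continuous `z : [0,1] → ℝ`. -/
theorem sup_dist_rational_indicator (z : C(Set.Icc (0:ℝ) 1, ℝ)) :
    (⨆ t : Set.Icc (0:ℝ) 1,
        |z t + (if (t : ℝ) ∈ Set.range ((↑) : ℚ → ℝ) then (1:ℝ) else -1)|)
      = (⨆ t : Set.Icc (0:ℝ) 1, |z t|) + 1 := by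
  have : Nonempty (Icc (0:ℝ) 1) := ⟨⟨0, left_mem_Icc.2 zero_le_one⟩⟩
  exact iSup_abs_add_sign_of_dense (Rat.denseRange_cast.subtype_Icc zero_lt_one)
    (dense_irrational.subtype_Icc zero_lt_one) z.continuous
    (isCompact_range (continuous_abs.comp z.continuous)).bddAbove
end
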